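/- A connected signed graph G is coverable if and only if the negativeness of G is not equal to 1 and there is no cut edge b of G such that G - b has a balanced component. -/

import Mathlib

/-!
Common framework: signed multigraphs represented by finite vertex/edge sets over ℕ,
an incidence map into `Sym2 ℕ` and a sign map into `ℤ`.
-/

structure SignedGraph where
  verts : Finset ℕ
  edges : Finset ℕ
  ends : ℕ → Sym2 ℕ
  sgn : ℕ → ℤ
  ends_mem : ∀ e ∈ edges, ∀ v ∈ ends e, v ∈ verts
  sgn_unit : ∀ e ∈ edges, sgn e = 1 ∨ sgn e = -1

namespace SignedGraph

/-- `H` is a (signed) subgraph of `G`. -/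
def IsSubgraph (H G : SignedGraph) : Prop :=
  H.verts ⊆ G.verts ∧ H.edges ⊆ G.edges ∧
    ∀ e ∈ H.edges, H.ends e = G.ends e ∧ H.sgn e = G.sgn e

/-- `G` is the union of its subgraphs `H₁` and `H₂`. -/
def IsUnion (G H₁ H₂ : SignedGraph) : Prop :=
  IsSubgraph H₁ G ∧ IsSubgraph H₂ G ∧
    G.verts = H₁.verts ∪ H₂.verts ∧ G.edges = H₁.edges ∪ H₂.edges

/-- `G` is the union of its subgraphs `H₁`, `H₂` and `H₃`. -/
def IsUnion3 (G H₁ H₂ H₃ : SignedGraph) : Prop :=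
  IsSubgraph H₁ G ∧ IsSubgraph H₂ G ∧ IsSubgraph H₃ G ∧
    G.verts = H₁.verts ∪ H₂.verts ∪ H₃.verts ∧
    G.edges = H₁.edges ∪ H₂.edges ∪ H₃.edges

/-- Degree of a vertex: a loop contributes 2, an ordinary incident edge 1. -/
def degree (G : SignedGraph) (v : ℕ) : ℕ :=
  ∑ e ∈ G.edges, (if G.ends e = s(v, v) then 2 else if v ∈ G.ends e then 1 else 0)

/-- Adjacency via some edge. -/
def Adj (G : SignedGraph) (u v : ℕ) : Prop := ∃ e ∈ G.edges, G.ends e = s(u, v)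

/-- `G` is connected (and nonempty). -/
def Connected (G : SignedGraph) : Prop :=
  G.verts.Nonempty ∧ ∀ u ∈ G.verts, ∀ v ∈ G.verts, Relation.ReflTransGen G.Adj u v

/-- Number of negative edges. -/
def negEdgeCount (G : SignedGraph) : ℕ := (G.edges.filter fun e => G.sgn e = -1).card

/-- A circuit: a connected 2-regular graph. -/
def IsCircuit (C : SignedGraph) : Prop :=
  C.Connected ∧ C.edges.Nonempty ∧ ∀ v ∈ C.verts, C.degree v = 2

/-- A balanced circuit: evenly many negative edges. -/
def IsBalancedCircuit (C : SignedGraph) : Prop := C.IsCircuit ∧ C.negEdgeCount % 2 = 0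

def IsUnbalancedCircuit (C : SignedGraph) : Prop := C.IsCircuit ∧ C.negEdgeCount % 2 = 1

/-- `P` is an `x y`-path (possibly trivial, i.e. a single vertex, when `x = y`). -/
def IsPath (P : SignedGraph) (x y : ℕ) : Prop :=
  (x = y ∧ P.verts = {x} ∧ P.edges = ∅) ∨
  (x ≠ y ∧ P.Connected ∧ x ∈ P.verts ∧ y ∈ P.verts ∧
    P.degree x = 1 ∧ P.degree y = 1 ∧
    ∀ v ∈ P.verts, v ≠ x → v ≠ y → P.degree v = 2)

/-- Sign of a subgraph: the product of the signs of its edges. -/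
def sgnOf (P : SignedGraph) : ℤ := ∏ e ∈ P.edges, P.sgn e

/-- `T` is a tadpole at `x`: union of an `x y`-path and an unbalanced circuit
meeting the path exactly in its end `y`. -/
def IsTadpoleAt (T : SignedGraph) (x : ℕ) : Prop :=
  ∃ y P C, T.IsUnion P C ∧ IsPath P x y ∧ IsUnbalancedCircuit C ∧
    P.verts ∩ C.verts = {y} ∧ P.edges ∩ C.edges = ∅

/-- `T` is a tadpole at `x` whose tadpole-path contains the edge `e₀`. -/
def TadpolePathContains (T : SignedGraph) (x e₀ : ℕ) : Prop :=
  ∃ y P C, T.IsUnion P C ∧ IsPath P x y ∧ IsUnbalancedCircuit C ∧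
    P.verts ∩ C.verts = {y} ∧ P.edges ∩ C.edges = ∅ ∧ e₀ ∈ P.edges

/-- `T` is a tadpole at `x` whose unbalanced circuit lies in `K`. -/
def IsTadpoleWithCircuitIn (T : SignedGraph) (x : ℕ) (K : SignedGraph) : Prop :=
  ∃ y P C, T.IsUnion P C ∧ IsPath P x y ∧ IsUnbalancedCircuit C ∧
    P.verts ∩ C.verts = {y} ∧ P.edges ∩ C.edges = ∅ ∧ IsSubgraph C K

/-- A barbell: two unbalanced circuits joined by a (possibly trivial) path meeting
the circuits only in its ends. -/
def IsBarbell (B : SignedGraph) : Prop :=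
  ∃ x y P C₁ C₂, IsPath P x y ∧ IsUnbalancedCircuit C₁ ∧ IsUnbalancedCircuit C₂ ∧
    IsUnion3 B P C₁ C₂ ∧
    P.verts ∩ C₁.verts = {x} ∧ P.verts ∩ C₂.verts = {y} ∧
    C₁.verts ∩ C₂.verts = ({x} : Finset ℕ) ∩ ({y} : Finset ℕ) ∧
    P.edges ∩ C₁.edges = ∅ ∧ P.edges ∩ C₂.edges = ∅ ∧ C₁.edges ∩ C₂.edges = ∅

/-- A signed circuit: a balanced circuit or a barbell. -/
def IsSignedCircuit (S : SignedGraph) : Prop := IsBalancedCircuit S ∨ IsBarbell S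

/-- The number of members of the family `F` (with multiplicity) containing the edge `e`. -/
def coverCount (F : Multiset SignedGraph) (e : ℕ) : ℕ :=
  Multiset.card (F.filter fun S => e ∈ S.edges)

/-- `F` is a signed circuit `k`-cover of `G`. -/
def IsSignedCircuitCover (G : SignedGraph) (k : ℕ) (F : Multiset SignedGraph) : Prop :=
  (∀ S ∈ F, IsSubgraph S G ∧ IsSignedCircuit S) ∧ ∀ e ∈ G.edges, coverCount F e = k

def HasSixCover (G : SignedGraph) : Prop := ∃ F, IsSignedCircuitCover G 6 F

/-- `G` is coverable: some family of signed circuits covers every edge at least once. -/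
def Coverable (G : SignedGraph) : Prop :=
  ∃ F : Multiset SignedGraph, (∀ S ∈ F, IsSubgraph S G ∧ IsSignedCircuit S) ∧
    ∀ e ∈ G.edges, 0 < coverCount F e

/-- The vertex set `W` is connected within `G`. -/
def ConnectedWithin (G : SignedGraph) (W : Finset ℕ) : Prop :=
  ∀ u ∈ W, ∀ v ∈ W,
    Relation.ReflTransGen (fun a b => a ∈ W ∧ b ∈ W ∧ G.Adj a b) u v

/-- `G` has a `K₄`-minor (branch-set characterization). -/
def HasK4Minor (G : SignedGraph) : Prop :=
  ∃ B : Fin 4 → Finset ℕ,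
    (∀ i, (B i).Nonempty) ∧ (∀ i, B i ⊆ G.verts) ∧
    (∀ i j, i ≠ j → Disjoint (B i) (B j)) ∧
    (∀ i, G.ConnectedWithin (B i)) ∧
    (∀ i j, i ≠ j → ∃ e ∈ G.edges, ∃ u ∈ B i, ∃ v ∈ B j, G.ends e = s(u, v))

def K4MinorFree (G : SignedGraph) : Prop := ¬ G.HasK4Minor

/-- `H` is obtained from `G` by a sequence of switchings. -/
def SEquiv (G H : SignedGraph) : Prop :=
  G.verts = H.verts ∧ G.edges = H.edges ∧ (∀ e ∈ G.edges, G.ends e = H.ends e) ∧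
  ∃ χ : ℕ → ℤ, (∀ v, χ v = 1 ∨ χ v = -1) ∧
    ∀ e ∈ G.edges, ∀ u v, G.ends e = s(u, v) → H.sgn e = χ u * χ v * G.sgn e

/-- The negativeness of `G`: minimum number of negative edges over all equivalent graphs. -/
noncomputable def negativeness (G : SignedGraph) : ℕ :=
  sInf {n | ∃ H, SEquiv G H ∧ H.negEdgeCount = n}

/-- `G` is balanced: equivalent to a graph with no negative edges. -/
def Balanced (G : SignedGraph) : Prop := ∃ H, SEquiv G H ∧ H.negEdgeCount = 0

/-- Deleting a set of edges. -/
def deleteEdges (G : SignedGraph) (S : Finset ℕ) : SignedGraph where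
  verts := G.verts
  edges := G.edges \ S
  ends := G.ends
  sgn := G.sgn
  ends_mem := fun e he v hv => G.ends_mem e (Finset.mem_sdiff.mp he).1 v hv
  sgn_unit := fun e he => G.sgn_unit e (Finset.mem_sdiff.mp he).1

def deleteEdge (G : SignedGraph) (b : ℕ) : SignedGraph := G.deleteEdges {b}

/-- Deleting a vertex (and all incident edges). -/
def deleteVertex (G : SignedGraph) (x : ℕ) : SignedGraph where
  verts := G.verts.erase x
  edges := G.edges.filter fun e => x ∉ G.ends e
  ends := G.ends
  sgn := G.sgn
  ends_mem := by
    intro e he v hv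
    rw [Finset.mem_filter] at he
    exact Finset.mem_erase.mpr ⟨fun h => he.2 (h ▸ hv), G.ends_mem e he.1 v hv⟩
  sgn_unit := fun e he => G.sgn_unit e (Finset.mem_filter.mp he).1

/-- Deleting all loops. -/
def removeLoops (G : SignedGraph) : SignedGraph where
  verts := G.verts
  edges := G.edges.filter fun e => ¬ (G.ends e).IsDiag
  ends := G.ends
  sgn := G.sgn
  ends_mem := fun e he v hv => G.ends_mem e (Finset.mem_filter.mp he).1 v hv
  sgn_unit := fun e he => G.sgn_unit e (Finset.mem_filter.mp he).1

/-- `b` is a cut edge: deleting it disconnects its two ends. -/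
def IsCutEdge (G : SignedGraph) (b : ℕ) : Prop :=
  b ∈ G.edges ∧ ∃ u v, G.ends b = s(u, v) ∧
    ¬ Relation.ReflTransGen (G.deleteEdge b).Adj u v

/-- `H` is a connected component of `K`: a connected subgraph closed under incidence. -/
def IsComponent (K H : SignedGraph) : Prop :=
  IsSubgraph H K ∧ H.Connected ∧
    ∀ e ∈ K.edges, ∀ u v, K.ends e = s(u, v) → u ∈ H.verts → e ∈ H.edges ∧ v ∈ H.verts

/-- `G` is 2-connected: connected and without cut vertices. -/
def TwoConnected (G : SignedGraph) : Prop :=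
  G.Connected ∧ ∀ x ∈ G.verts, ∀ u ∈ (G.deleteVertex x).verts,
    ∀ v ∈ (G.deleteVertex x).verts, Relation.ReflTransGen (G.deleteVertex x).Adj u v

/-- A two-terminal signed graph with source `x` and target `y`
(`x = y` only for a single negative loop). -/
def IsTwoTerminal (H : SignedGraph) (x y : ℕ) : Prop :=
  H.Connected ∧ H.edges.Nonempty ∧ x ∈ H.verts ∧ y ∈ H.verts ∧
    (x = y → H.verts = {x} ∧ ∃ e, H.edges = {e} ∧ H.ends e = s(x, x) ∧ H.sgn e = -1)

/-- `H` is a piece of `G` at `{x, y}`: `G` is the parallel connection of `H`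
with another two-terminal graph. -/
def IsPiece (G H : SignedGraph) (x y : ℕ) : Prop :=
  IsTwoTerminal H x y ∧ ∃ H', IsTwoTerminal H' x y ∧ G.IsUnion H H' ∧
    H.verts ∩ H'.verts = ({x, y} : Finset ℕ) ∧ H.edges ∩ H'.edges = ∅

/-- `G` is the parallel connection of `H₁` and `H₂` with terminals `x ≠ y`. -/
def IsParallel2 (G H₁ H₂ : SignedGraph) (x y : ℕ) : Prop :=
  x ≠ y ∧ IsTwoTerminal H₁ x y ∧ IsTwoTerminal H₂ x y ∧
    G.IsUnion H₁ H₂ ∧ H₁.verts ∩ H₂.verts = ({x, y} : Finset ℕ) ∧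
    H₁.edges ∩ H₂.edges = ∅

/-- `G` is the parallel connection of the list `Hs` of pieces with terminals `x, y`. -/
def IsParallelDecomp (G : SignedGraph) (Hs : List SignedGraph) (x y : ℕ) : Prop :=
  x ≠ y ∧ (∀ H ∈ Hs, IsTwoTerminal H x y ∧ IsSubgraph H G) ∧
  Hs.Pairwise (fun H K => H.verts ∩ K.verts = ({x, y} : Finset ℕ) ∧ H.edges ∩ K.edges = ∅) ∧
  G.verts = Hs.foldr (fun H s => H.verts ∪ s) ∅ ∧
  G.edges = Hs.foldr (fun H s => H.edges ∪ s) ∅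

/-- `G` is the series connection of the two-terminal graphs `B 1, …, B n`,
where `B i` has terminals `xs (i-1)` and `xs i`. -/
def IsSeriesConn (G : SignedGraph) (n : ℕ) (B : ℕ → SignedGraph) (xs : ℕ → ℕ) : Prop :=
  1 ≤ n ∧
  (∀ i ∈ Finset.Icc 1 n, IsTwoTerminal (B i) (xs (i - 1)) (xs i)) ∧
  (∀ i ∈ Finset.Icc 1 n, IsSubgraph (B i) G) ∧
  G.verts = (Finset.Icc 1 n).biUnion (fun i => (B i).verts) ∧
  G.edges = (Finset.Icc 1 n).biUnion (fun i => (B i).edges) ∧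
  (∀ i ∈ Finset.Icc 1 n, ∀ j ∈ Finset.Icc 1 n, i < j →
    (B i).edges ∩ (B j).edges = ∅ ∧
    (B i).verts ∩ (B j).verts =
      ({xs (i - 1), xs i} : Finset ℕ) ∩ ({xs (j - 1), xs j} : Finset ℕ))

/-- The structured parts of a `Ψ_{xy}(t)`-cover of `H`:
`t` positive `xy`-paths, `t` negative `xy`-paths, `t` tadpoles at `x`,
`6 - 2t` tadpoles at `y`, and some signed circuits, forming a signed subgraph 6-cover. -/
def IsPsiCoverParts (H : SignedGraph) (x y : ℕ) (t : ℕ)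
    (Fp Fn Fx Fy Fc : Multiset SignedGraph) : Prop :=
  t ≤ 3 ∧
  (∀ S ∈ Fp + Fn + Fx + Fy + Fc, IsSubgraph S H) ∧
  (∀ e ∈ H.edges, coverCount (Fp + Fn + Fx + Fy + Fc) e = 6) ∧
  Multiset.card Fp = t ∧ Multiset.card Fn = t ∧
  Multiset.card Fx = t ∧ Multiset.card Fy = 6 - 2 * t ∧
  (∀ P ∈ Fp, IsPath P x y ∧ sgnOf P = 1) ∧
  (∀ P ∈ Fn, IsPath P x y ∧ sgnOf P = -1) ∧
  (∀ T ∈ Fx, IsTadpoleAt T x) ∧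
  (∀ T ∈ Fy, IsTadpoleAt T y) ∧
  (∀ C ∈ Fc, IsSignedCircuit C)

/-- `H` has a `Ψ_{xy}(t)`-cover. -/
def HasPsiCover (H : SignedGraph) (x y : ℕ) (t : ℕ) : Prop :=
  ∃ Fp Fn Fx Fy Fc, IsPsiCoverParts H x y t Fp Fn Fx Fy Fc

/-- `H` has a `Ψ_{xy}(2)`-cover in which no tadpole at `x` contains `y` and
no tadpole at `y` contains `x`. -/
def HasPsi2NoCross (H : SignedGraph) (x y : ℕ) : Prop :=
  ∃ Fp Fn Fx Fy Fc, IsPsiCoverParts H x y 2 Fp Fn Fx Fy Fc ∧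
    (∀ T ∈ Fx, y ∉ T.verts) ∧ (∀ T ∈ Fy, x ∉ T.verts)

/-- The structured parts of a `Ψ*_{xy}(2)`-cover of `H` relative to the edge `e₀ = xy`. -/
def IsPsiStarCoverParts (H : SignedGraph) (x y e₀ : ℕ)
    (Fp Fn Fc : Multiset SignedGraph) (Tx₁ Tx₂ Ty₁ Ty₂ : SignedGraph) : Prop :=
  e₀ ∈ H.edges ∧ H.ends e₀ = s(x, y) ∧
  IsPsiCoverParts H x y 2 Fp Fn {Tx₁, Tx₂} {Ty₁, Ty₂} Fc ∧
  y ∉ Tx₁.verts ∧ TadpolePathContains Tx₂ x e₀ ∧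
  x ∉ Ty₁.verts ∧ TadpolePathContains Ty₂ y e₀

/-- `H` has a `Ψ*_{xy}(2)`-cover. -/
def HasPsiStarCover (H : SignedGraph) (x y : ℕ) : Prop :=
  ∃ e₀ Fp Fn Fc Tx₁ Tx₂ Ty₁ Ty₂, IsPsiStarCoverParts H x y e₀ Fp Fn Fc Tx₁ Tx₂ Ty₁ Ty₂

/-- The signed graph `R₀(x, y)`: an unbalanced 2-circuit on `x, y`. -/
def IsR0 (H : SignedGraph) (x y : ℕ) : Prop :=
  x ≠ y ∧ H.verts = {x, y} ∧
  ∃ e f, e ≠ f ∧ H.edges = {e, f} ∧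
    H.ends e = s(x, y) ∧ H.sgn e = 1 ∧ H.ends f = s(x, y) ∧ H.sgn f = -1

/-- The signed graph `R₁(x, y)`: a positive triangle on `x, y, z` with a negative loop at `z`. -/
def IsR1 (H : SignedGraph) (x y : ℕ) : Prop :=
  ∃ z, x ≠ y ∧ x ≠ z ∧ y ≠ z ∧ H.verts = {x, y, z} ∧
  ∃ e₁ e₂ e₃ e₄, [e₁, e₂, e₃, e₄].Nodup ∧ H.edges = {e₁, e₂, e₃, e₄} ∧
    H.ends e₁ = s(x, y) ∧ H.sgn e₁ = 1 ∧
    H.ends e₂ = s(y, z) ∧ H.sgn e₂ = 1 ∧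
    H.ends e₃ = s(z, x) ∧ H.sgn e₃ = 1 ∧
    H.ends e₄ = s(z, z) ∧ H.sgn e₄ = -1

/-- The signed graph `R₂(x, y)`: a positive triangle on `x, y, w` with an extra
negative edge joining `w` and `y`. -/
def IsR2 (H : SignedGraph) (x y : ℕ) : Prop :=
  ∃ w, x ≠ y ∧ x ≠ w ∧ y ≠ w ∧ H.verts = {x, y, w} ∧
  ∃ e₁ e₂ e₃ e₄, [e₁, e₂, e₃, e₄].Nodup ∧ H.edges = {e₁, e₂, e₃, e₄} ∧
    H.ends e₁ = s(x, y) ∧ H.sgn e₁ = 1 ∧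
    H.ends e₂ = s(y, w) ∧ H.sgn e₂ = 1 ∧
    H.ends e₃ = s(w, x) ∧ H.sgn e₃ = 1 ∧
    H.ends e₄ = s(w, y) ∧ H.sgn e₄ = -1

/-- The signed graph `R₃(x, y)`: a positive 4-circuit `x y u w x` with an extra
negative edge joining `w` and `u`. -/
def IsR3 (H : SignedGraph) (x y : ℕ) : Prop :=
  ∃ u w, [x, y, u, w].Nodup ∧ H.verts = {x, y, u, w} ∧
  ∃ e₁ e₂ e₃ e₄ e₅, [e₁, e₂, e₃, e₄, e₅].Nodup ∧ H.edges = {e₁, e₂, e₃, e₄, e₅} ∧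
    H.ends e₁ = s(x, y) ∧ H.sgn e₁ = 1 ∧
    H.ends e₂ = s(y, u) ∧ H.sgn e₂ = 1 ∧
    H.ends e₃ = s(u, w) ∧ H.sgn e₃ = 1 ∧
    H.ends e₄ = s(w, x) ∧ H.sgn e₄ = 1 ∧
    H.ends e₅ = s(w, u) ∧ H.sgn e₅ = -1

/-- The signed graph `R₄(x, y)`: `R₃(x, y)` with an extra positive edge joining `x` and `u`. -/
def IsR4 (H : SignedGraph) (x y : ℕ) : Prop :=
  ∃ u w, [x, y, u, w].Nodup ∧ H.verts = {x, y, u, w} ∧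
  ∃ e₁ e₂ e₃ e₄ e₅ e₆, [e₁, e₂, e₃, e₄, e₅, e₆].Nodup ∧
    H.edges = {e₁, e₂, e₃, e₄, e₅, e₆} ∧
    H.ends e₁ = s(x, y) ∧ H.sgn e₁ = 1 ∧
    H.ends e₂ = s(y, u) ∧ H.sgn e₂ = 1 ∧
    H.ends e₃ = s(u, w) ∧ H.sgn e₃ = 1 ∧
    H.ends e₄ = s(w, x) ∧ H.sgn e₄ = 1 ∧
    H.ends e₅ = s(w, u) ∧ H.sgn e₅ = -1 ∧
    H.ends e₆ = s(x, u) ∧ H.sgn e₆ = 1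

/-- The signed graph `R₅(x, y)`: vertices `x, y, u, t, v`, positive edges
`vx, xy, yu, xu, ut, tv` and a negative edge joining `t` and `v`. -/
def IsR5 (H : SignedGraph) (x y : ℕ) : Prop :=
  ∃ u t v, [x, y, u, t, v].Nodup ∧ H.verts = {x, y, u, t, v} ∧
  ∃ e₁ e₂ e₃ e₄ e₅ e₆ e₇, [e₁, e₂, e₃, e₄, e₅, e₆, e₇].Nodup ∧
    H.edges = {e₁, e₂, e₃, e₄, e₅, e₆, e₇} ∧
    H.ends e₁ = s(v, x) ∧ H.sgn e₁ = 1 ∧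
    H.ends e₂ = s(x, y) ∧ H.sgn e₂ = 1 ∧
    H.ends e₃ = s(y, u) ∧ H.sgn e₃ = 1 ∧
    H.ends e₄ = s(x, u) ∧ H.sgn e₄ = 1 ∧
    H.ends e₅ = s(u, t) ∧ H.sgn e₅ = 1 ∧
    H.ends e₆ = s(t, v) ∧ H.sgn e₆ = 1 ∧
    H.ends e₇ = s(t, v) ∧ H.sgn e₇ = -1

/-- The two-terminal signed graph `D₁(x, y)`: vertices `x, z, y`, positive edges
`xz` and `zy`, and one negative edge parallel to `xz`. -/
def IsD1 (H : SignedGraph) (x y : ℕ) : Prop :=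
  ∃ z, x ≠ y ∧ x ≠ z ∧ y ≠ z ∧ H.verts = {x, z, y} ∧
  ∃ e₁ e₂ e₃, [e₁, e₂, e₃].Nodup ∧ H.edges = {e₁, e₂, e₃} ∧
    H.ends e₁ = s(x, z) ∧ H.sgn e₁ = 1 ∧
    H.ends e₂ = s(z, y) ∧ H.sgn e₂ = 1 ∧
    H.ends e₃ = s(x, z) ∧ H.sgn e₃ = -1

/-- The two-terminal signed graph `D₂(x, y)`: a positive path `x u v y` together
with one negative edge parallel to `uv`. -/
def IsD2 (H : SignedGraph) (x y : ℕ) : Prop :=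
  ∃ u v, [x, u, v, y].Nodup ∧ H.verts = {x, u, v, y} ∧
  ∃ e₁ e₂ e₃ e₄, [e₁, e₂, e₃, e₄].Nodup ∧ H.edges = {e₁, e₂, e₃, e₄} ∧
    H.ends e₁ = s(x, u) ∧ H.sgn e₁ = 1 ∧
    H.ends e₂ = s(u, v) ∧ H.sgn e₂ = 1 ∧
    H.ends e₃ = s(v, y) ∧ H.sgn e₃ = 1 ∧
    H.ends e₄ = s(u, v) ∧ H.sgn e₄ = -1

/-- `G` is the graph `P(H₁ ∪ y₁z, H₂ ∪ y₂z)`: the two-terminal graphs `H₁(x, y₁)`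
and `H₂(x, y₂)` glued at `x`, each extended by a new edge to a new vertex `z`. -/
def IsTwoBlockConn (G H₁ H₂ : SignedGraph) (x y₁ y₂ z e₁ e₂ : ℕ) : Prop :=
  IsTwoTerminal H₁ x y₁ ∧ IsTwoTerminal H₂ x y₂ ∧
  H₁.verts ∩ H₂.verts = {x} ∧ H₁.edges ∩ H₂.edges = ∅ ∧
  z ∉ H₁.verts ∧ z ∉ H₂.verts ∧
  e₁ ∉ H₁.edges ∧ e₁ ∉ H₂.edges ∧ e₂ ∉ H₁.edges ∧ e₂ ∉ H₂.edges ∧ e₁ ≠ e₂ ∧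
  G.verts = insert z (H₁.verts ∪ H₂.verts) ∧
  G.edges = insert e₁ (insert e₂ (H₁.edges ∪ H₂.edges)) ∧
  IsSubgraph H₁ G ∧ IsSubgraph H₂ G ∧
  G.ends e₁ = s(y₁, z) ∧ G.ends e₂ = s(y₂, z) ∧
  (G.sgn e₁ = 1 ∨ G.sgn e₁ = -1) ∧ (G.sgn e₂ = 1 ∨ G.sgn e₂ = -1)

/-- `G'` is obtained from `G` by adding a new negative loop `ℓ` at `x`. -/
def IsAddNegLoop (G' G : SignedGraph) (x ℓ : ℕ) : Prop :=
  x ∈ G.verts ∧ ℓ ∉ G.edges ∧ G'.verts = G.verts ∧ G'.edges = insert ℓ G.edges ∧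
  IsSubgraph G G' ∧ G'.ends ℓ = s(x, x) ∧ G'.sgn ℓ = -1

/-- A minimal counterexample to the main theorem: a coverable signed
`K₄`-minor-free graph without a signed circuit 6-cover, with the minimum
number of edges among all such graphs. -/
def MinimalCounterexample (G : SignedGraph) : Prop :=
  G.Coverable ∧ G.K4MinorFree ∧ ¬ G.HasSixCover ∧
    ∀ H : SignedGraph, H.Coverable → H.K4MinorFree → ¬ H.HasSixCover →
      G.edges.card ≤ H.edges.card

end SignedGraph

/-!
Necessity. If `G` switches to a graph with a single negative edge `f`, every balanced circuit
avoids `f` and every unbalanced circuit contains it, so no signed circuit covers `f` (the two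
circuits of a barbell are edge-disjoint). A circuit never uses a cut edge `b`, so a signed
circuit through `b` is a barbell whose path crosses `b`; following the path from the side of a
component `H` of `G - b` leads to an unbalanced circuit lying in `H`.

Sufficiency. A graph all of whose cycles are positive is balanced (add the edges one at a time,
flipping one side of each bridge). If `e` is a cut edge, both sides are unbalanced, and a path
through `e` joins unbalanced circuits on the two sides into a barbell. Otherwise `e` closes a
cycle `C`; if `C` is unbalanced, then so is `G - e`, the negativeness not being `1`, and an
unbalanced cycle `D` of `G - e` forms a barbell with `C`, unless `C` and `D` share two vertices.
Then the ears of `C` together with either arc of `D` give two cycles through `e` whose signs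
multiply to the sign of `D`, so one of them is balanced.
-/

namespace SignedGraph

open Relation Finset

lemma exists_ends_eq (G : SignedGraph) (e : ℕ) : ∃ a b, G.ends e = s(a, b) := by
  induction G.ends e using Sym2.ind with
  | _ a b => exact ⟨a, b, rfl⟩

lemma left_mem_verts {G : SignedGraph} {e a b : ℕ} (he : e ∈ G.edges)
    (h : G.ends e = s(a, b)) : a ∈ G.verts :=
  G.ends_mem e he a (by simp [h])

lemma right_mem_verts {G : SignedGraph} {e a b : ℕ} (he : e ∈ G.edges)
    (h : G.ends e = s(a, b)) : b ∈ G.verts :=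
  G.ends_mem e he b (by simp [h])

lemma sign_mul {a b : ℤ} (ha : a = 1 ∨ a = -1) (hb : b = 1 ∨ b = -1) :
    a * b = 1 ∨ a * b = -1 :=
  Int.isUnit_iff.mp ((Int.isUnit_iff.mpr ha).mul (Int.isUnit_iff.mpr hb))

lemma sign_mul_self {a : ℤ} (ha : a = 1 ∨ a = -1) : a * a = 1 :=
  Int.isUnit_mul_self (Int.isUnit_iff.mpr ha)

lemma sign_list_prod {l : List ℤ} (h : ∀ a ∈ l, a = 1 ∨ a = -1) :
    l.prod = 1 ∨ l.prod = -1 :=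
  Int.isUnit_iff.mp (List.prod_isUnit fun a ha => Int.isUnit_iff.mpr (h a ha))

namespace IsSubgraph

variable {H G K : SignedGraph}

lemma trans (h₁ : IsSubgraph H G) (h₂ : IsSubgraph G K) : IsSubgraph H K :=
  ⟨h₁.1.trans h₂.1, h₁.2.1.trans h₂.2.1, fun e he =>
    ⟨(h₁.2.2 e he).1.trans (h₂.2.2 e (h₁.2.1 he)).1,
      (h₁.2.2 e he).2.trans (h₂.2.2 e (h₁.2.1 he)).2⟩⟩

lemma mem_verts (h : IsSubgraph H G) {v : ℕ} (hv : v ∈ H.verts) : v ∈ G.verts := h.1 hv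

lemma mem_edges (h : IsSubgraph H G) {e : ℕ} (he : e ∈ H.edges) : e ∈ G.edges := h.2.1 he

lemma ends_eq (h : IsSubgraph H G) {e : ℕ} (he : e ∈ H.edges) : H.ends e = G.ends e :=
  (h.2.2 e he).1

lemma sgn_eq (h : IsSubgraph H G) {e : ℕ} (he : e ∈ H.edges) : H.sgn e = G.sgn e :=
  (h.2.2 e he).2

end IsSubgraph

lemma Adj.symm {G : SignedGraph} {u v : ℕ} (h : G.Adj u v) : G.Adj v u := by
  obtain ⟨e, he, hd⟩ := h
  exact ⟨e, he, hd.trans Sym2.eq_swap⟩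

lemma Adj.mono {H G : SignedGraph} (hs : IsSubgraph H G) {u v : ℕ} (h : H.Adj u v) :
    G.Adj u v := by
  obtain ⟨e, he, hd⟩ := h
  exact ⟨e, hs.mem_edges he, (hs.ends_eq he).symm.trans hd⟩

lemma reach_symm {G : SignedGraph} {u v : ℕ} (h : ReflTransGen G.Adj u v) :
    ReflTransGen G.Adj v u := by
  induction h with
  | refl => exact .refl
  | tail _ hab ih => exact ReflTransGen.head hab.symm ih

lemma reach_mono {H G : SignedGraph} (hs : IsSubgraph H G) {u v : ℕ}
    (h : ReflTransGen H.Adj u v) : ReflTransGen G.Adj u v :=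
  ReflTransGen.mono (r := H.Adj) (p := G.Adj) (fun _ _ => Adj.mono hs) u v h

lemma mem_deleteEdge_edges {G : SignedGraph} {b e : ℕ} :
    e ∈ (G.deleteEdge b).edges ↔ e ∈ G.edges ∧ e ≠ b := by
  simp [deleteEdge, deleteEdges]

lemma deleteEdge_isSubgraph (G : SignedGraph) (b : ℕ) : IsSubgraph (G.deleteEdge b) G :=
  ⟨subset_rfl, fun _ he => (mem_deleteEdge_edges.mp he).1, fun _ _ => ⟨rfl, rfl⟩⟩

lemma IsSubgraph.deleteEdge_of_not_mem {C G : SignedGraph} {b : ℕ} (h : IsSubgraph C G)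
    (hb : b ∉ C.edges) : IsSubgraph C (G.deleteEdge b) :=
  ⟨h.1, fun _ he => mem_deleteEdge_edges.mpr ⟨h.mem_edges he, ne_of_mem_of_not_mem he hb⟩,
    h.2.2⟩

lemma IsSubgraph.deleteEdge {H G : SignedGraph} (h : IsSubgraph H G) (b : ℕ) :
    IsSubgraph (H.deleteEdge b) (G.deleteEdge b) :=
  ⟨h.1, fun _ he => mem_deleteEdge_edges.mpr
      ⟨h.mem_edges (mem_deleteEdge_edges.mp he).1, (mem_deleteEdge_edges.mp he).2⟩,
    fun _ he => h.2.2 _ (mem_deleteEdge_edges.mp he).1⟩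

/-! ### Degrees and the handshake lemma -/

def incidence (G : SignedGraph) (v e : ℕ) : ℕ :=
  if G.ends e = s(v, v) then 2 else if v ∈ G.ends e then 1 else 0

lemma degree_eq_sum_incidence (G : SignedGraph) (v : ℕ) :
    G.degree v = ∑ e ∈ G.edges, G.incidence v e := rfl

lemma incidence_eq {G : SignedGraph} {e a b : ℕ} (h : G.ends e = s(a, b)) (v : ℕ) :
    G.incidence v e = (if v = a then 1 else 0) + (if v = b then 1 else 0) := by
  unfold incidence
  rw [h]
  rcases eq_or_ne v a with rfl | ha <;> rcases eq_or_ne v b with rfl | hb <;>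
    simp [*, Ne.symm]

lemma degree_deleteEdge {G : SignedGraph} {b : ℕ} (hb : b ∈ G.edges) (v : ℕ) :
    G.degree v = (G.deleteEdge b).degree v + G.incidence v b := by
  have hedges : (G.deleteEdge b).edges = G.edges.erase b := by
    simp [deleteEdge, deleteEdges, Finset.sdiff_singleton_eq_erase]
  rw [degree_eq_sum_incidence, degree_eq_sum_incidence, hedges,
    ← Finset.add_sum_erase _ _ hb, add_comm]
  rfl

lemma degree_eq_zero_of_not_mem {G : SignedGraph} {v : ℕ} (hv : v ∉ G.verts) :
    G.degree v = 0 := by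
  rw [degree_eq_sum_incidence]
  refine Finset.sum_eq_zero fun e he => ?_
  obtain ⟨a, b, hab⟩ := G.exists_ends_eq e
  have ha : v ≠ a := fun h => hv (h ▸ left_mem_verts he hab)
  have hb : v ≠ b := fun h => hv (h ▸ right_mem_verts he hab)
  simp [incidence_eq hab, ha, hb]

lemma sum_incidence_eq {K : SignedGraph} {e a b : ℕ} (h : K.ends e = s(a, b)) (S : Finset ℕ) :
    ∑ v ∈ S, K.incidence v e = (if a ∈ S then 1 else 0) + (if b ∈ S then 1 else 0) := by
  simp only [incidence_eq h, Finset.sum_add_distrib, Finset.sum_ite_eq']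

lemma even_sum_degree_of_closed {K : SignedGraph} {S : Finset ℕ}
    (hS : ∀ e ∈ K.edges, ∀ a b, K.ends e = s(a, b) → a ∈ S → b ∈ S) :
    Even (∑ v ∈ S, K.degree v) := by
  simp only [degree_eq_sum_incidence]
  rw [Finset.sum_comm]
  refine Finset.even_sum _ fun e he => ?_
  obtain ⟨a, b, hab⟩ := K.exists_ends_eq e
  have hiff : a ∈ S ↔ b ∈ S := ⟨hS e he a b hab, hS e he b a (hab.trans Sym2.eq_swap)⟩
  rw [sum_incidence_eq hab]
  by_cases ha : a ∈ S
  · simp [ha, hiff.mp ha]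
  · simp [ha, mt hiff.mpr ha]

/-- Handshake lemma, applied to the vertices reachable from `u`. -/
lemma exists_odd_degree_reach {K : SignedGraph} {u : ℕ} (hu : Odd (K.degree u)) :
    ∃ w, w ≠ u ∧ Odd (K.degree w) ∧ ReflTransGen K.Adj u w := by
  classical
  have huK : u ∈ K.verts := by
    by_contra h
    rw [degree_eq_zero_of_not_mem h] at hu
    exact Nat.not_odd_zero hu
  set S := K.verts.filter fun v => ReflTransGen K.Adj u v
  have hS : ∀ e ∈ K.edges, ∀ a b, K.ends e = s(a, b) → a ∈ S → b ∈ S := fun e he a b hab ha =>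
    Finset.mem_filter.mpr ⟨right_mem_verts he hab, (Finset.mem_filter.mp ha).2.tail ⟨e, he, hab⟩⟩
  have hcard := (Finset.even_sum_iff_even_card_odd _).mp (even_sum_degree_of_closed hS)
  have huS : u ∈ S.filter fun v => Odd (K.degree v) :=
    Finset.mem_filter.mpr ⟨Finset.mem_filter.mpr ⟨huK, .refl⟩, hu⟩
  have htwo : 1 < (S.filter fun v => Odd (K.degree v)).card := by
    obtain ⟨k, hk⟩ := hcard
    have := Finset.card_pos.mpr ⟨u, huS⟩
    omega
  obtain ⟨w, hw, hwu⟩ := Finset.exists_mem_ne htwo u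
  obtain ⟨hwS, hwodd⟩ := Finset.mem_filter.mp hw
  exact ⟨w, hwu, hwodd, (Finset.mem_filter.mp hwS).2⟩

lemma odd_degree_deleteEdge_of_even {K : SignedGraph} {b u v : ℕ} (hb : b ∈ K.edges)
    (hends : K.ends b = s(u, v)) (huv : u ≠ v) (hu : Even (K.degree u)) :
    Odd ((K.deleteEdge b).degree u) := by
  have h := degree_deleteEdge hb u
  rw [incidence_eq hends, if_pos rfl, if_neg huv] at h
  rw [h] at hu
  exact Nat.not_even_iff_odd.mp (Nat.even_add_one.mp hu)

lemma odd_degree_of_deleteEdge {K : SignedGraph} {b u v w : ℕ} (hb : b ∈ K.edges)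
    (hends : K.ends b = s(u, v)) (hwu : w ≠ u) (hwv : w ≠ v)
    (hw : Odd ((K.deleteEdge b).degree w)) : Odd (K.degree w) := by
  rw [degree_deleteEdge hb w, incidence_eq hends, if_neg hwu, if_neg hwv]
  exact hw

lemma reach_deleteEdge_of_even_degree {K : SignedGraph} (heven : ∀ w, Even (K.degree w))
    {b u v : ℕ} (hb : b ∈ K.edges) (hends : K.ends b = s(u, v)) (huv : u ≠ v) :
    ReflTransGen (K.deleteEdge b).Adj u v := by
  obtain ⟨w, hwu, hodd, hreach⟩ :=
    exists_odd_degree_reach (odd_degree_deleteEdge_of_even hb hends huv (heven u))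
  obtain rfl : w = v := by
    by_contra hwv
    exact Nat.not_odd_iff_even.mpr (heven w) (odd_degree_of_deleteEdge hb hends hwu hwv hodd)
  exact hreach

lemma IsCircuit.even_degree {C : SignedGraph} (h : C.IsCircuit) (v : ℕ) : Even (C.degree v) := by
  by_cases hv : v ∈ C.verts
  · rw [h.2.2 v hv]
    exact even_two
  · rw [degree_eq_zero_of_not_mem hv]
    exact ⟨0, rfl⟩

lemma IsCutEdge.not_mem_circuit {G C : SignedGraph} {b : ℕ} (hb : G.IsCutEdge b)
    (hC : C.IsCircuit) (hsub : IsSubgraph C G) : b ∉ C.edges := by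
  intro hbC
  obtain ⟨-, u, v, hends, hnr⟩ := hb
  have huv : u ≠ v := by
    rintro rfl
    exact hnr .refl
  exact hnr (reach_mono (hsub.deleteEdge b)
    (reach_deleteEdge_of_even_degree hC.even_degree hbC ((hsub.ends_eq hbC).trans hends) huv))

lemma IsPath.reach_end_deleteEdge {P : SignedGraph} {x y b u v : ℕ} (hP : IsPath P x y)
    (hb : b ∈ P.edges) (hends : P.ends b = s(u, v))
    (hnr : ¬ ReflTransGen (P.deleteEdge b).Adj u v) :
    ReflTransGen (P.deleteEdge b).Adj u x ∨ ReflTransGen (P.deleteEdge b).Adj u y := by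
  rcases hP with ⟨-, -, hPe⟩ | ⟨-, -, -, -, -, -, hinner⟩
  · simp [hPe] at hb
  have huv : u ≠ v := by
    rintro rfl
    exact hnr .refl
  by_cases hux : u = x
  · exact Or.inl (hux ▸ .refl)
  by_cases huy : u = y
  · exact Or.inr (huy ▸ .refl)
  have hu2 : P.degree u = 2 := hinner u (left_mem_verts hb hends) hux huy
  obtain ⟨w, hwu, hodd, hreach⟩ :=
    exists_odd_degree_reach (odd_degree_deleteEdge_of_even hb hends huv (hu2 ▸ even_two))
  have hwv : w ≠ v := fun h => hnr (h ▸ hreach)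
  by_cases hwx : w = x
  · exact Or.inl (hwx ▸ hreach)
  by_cases hwy : w = y
  · exact Or.inr (hwy ▸ hreach)
  have hPw := odd_degree_of_deleteEdge hb hends hwu hwv hodd
  by_cases hwP : w ∈ P.verts
  · rw [hinner w hwP hwx hwy] at hPw
    exact absurd hPw (by decide)
  · rw [degree_eq_zero_of_not_mem hwP] at hPw
    exact absurd hPw (by decide)

/-! ### Connectivity and components -/

lemma reach_deleteEdge_or {K : SignedGraph} {b u v x : ℕ} (hends : K.ends b = s(u, v))
    (h : ReflTransGen K.Adj x u) :
    ReflTransGen (K.deleteEdge b).Adj x u ∨ ReflTransGen (K.deleteEdge b).Adj x v := by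
  induction h using ReflTransGen.head_induction_on with
  | refl => exact Or.inl .refl
  | @head a c hac _ ih =>
    obtain ⟨e, he, hde⟩ := hac
    by_cases heb : e = b
    · subst heb
      rw [hends, Sym2.eq_iff] at hde
      rcases hde with ⟨rfl, -⟩ | ⟨-, rfl⟩
      · exact Or.inl .refl
      · exact Or.inr .refl
    · have hadj : (K.deleteEdge b).Adj a c := ⟨e, mem_deleteEdge_edges.mpr ⟨he, heb⟩, hde⟩
      exact ih.imp (ReflTransGen.head hadj) (ReflTransGen.head hadj)

lemma IsComponent.mem_verts_of_reach {K H : SignedGraph} (h : IsComponent K H) {a c : ℕ}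
    (ha : a ∈ H.verts) (hr : ReflTransGen K.Adj a c) : c ∈ H.verts := by
  induction hr with
  | refl => exact ha
  | tail _ hcd ih =>
    obtain ⟨e, he, hde⟩ := hcd
    exact (h.2.2 e he _ _ hde ih).2

lemma IsComponent.isSubgraph_of_connected {K H C : SignedGraph} (hH : IsComponent K H)
    (hC : IsSubgraph C K) (hCconn : C.Connected) {x : ℕ} (hx : x ∈ C.verts)
    (hxH : x ∈ H.verts) : IsSubgraph C H := by
  have hverts : ∀ c ∈ C.verts, c ∈ H.verts := fun c hc =>
    hH.mem_verts_of_reach hxH (reach_mono hC (hCconn.2 x hx c hc))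
  have hedges : ∀ e ∈ C.edges, e ∈ H.edges := fun e he => by
    obtain ⟨p, q, hpq⟩ := C.exists_ends_eq e
    exact (hH.2.2 e (hC.mem_edges he) p q ((hC.ends_eq he).symm.trans hpq)
      (hverts p (left_mem_verts he hpq))).1
  refine ⟨hverts, hedges, fun e he => ?_⟩
  rw [hC.ends_eq he, hC.sgn_eq he, hH.1.ends_eq (hedges e he), hH.1.sgn_eq (hedges e he)]
  exact ⟨rfl, rfl⟩

lemma IsComponent.mem_ends_of_deleteEdge {G H : SignedGraph} (hconn : G.Connected) {b u v : ℕ}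
    (hb : b ∈ G.edges) (hends : G.ends b = s(u, v)) (hH : IsComponent (G.deleteEdge b) H) :
    u ∈ H.verts ∨ v ∈ H.verts := by
  obtain ⟨h, hh⟩ := hH.2.1.1
  exact (reach_deleteEdge_or hends (hconn.2 h (hH.1.mem_verts hh) u
    (left_mem_verts hb hends))).imp (hH.mem_verts_of_reach hh) (hH.mem_verts_of_reach hh)

noncomputable def componentOf (K : SignedGraph) (a : ℕ) : SignedGraph :=
  open scoped Classical in
  { verts := K.verts.filter fun v => ReflTransGen K.Adj a v
    edges := K.edges.filter fun e => ∀ w ∈ K.ends e, ReflTransGen K.Adj a w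
    ends := K.ends
    sgn := K.sgn
    ends_mem := fun e he w hw =>
      Finset.mem_filter.mpr ⟨K.ends_mem e (Finset.mem_filter.mp he).1 w hw,
        (Finset.mem_filter.mp he).2 w hw⟩
    sgn_unit := fun e he => K.sgn_unit e (Finset.mem_filter.mp he).1 }

lemma mem_componentOf_verts {K : SignedGraph} {a v : ℕ} :
    v ∈ (componentOf K a).verts ↔ v ∈ K.verts ∧ ReflTransGen K.Adj a v := by
  classical
  exact Finset.mem_filter

lemma componentOf_isSubgraph (K : SignedGraph) (a : ℕ) : IsSubgraph (componentOf K a) K := by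
  classical
  exact ⟨Finset.filter_subset _ _, Finset.filter_subset _ _, fun _ _ => ⟨rfl, rfl⟩⟩

lemma mem_componentOf_edges {K : SignedGraph} {a e u v : ℕ} (he : e ∈ K.edges)
    (hends : K.ends e = s(u, v)) (hu : ReflTransGen K.Adj a u) : e ∈ (componentOf K a).edges := by
  classical
  refine Finset.mem_filter.mpr ⟨he, fun w hw => ?_⟩
  rw [hends, Sym2.mem_iff] at hw
  rcases hw with rfl | rfl
  · exact hu
  · exact hu.tail ⟨e, he, hends⟩

lemma componentOf_isComponent {K : SignedGraph} {a : ℕ} (ha : a ∈ K.verts) :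
    IsComponent K (componentOf K a) := by
  have hreach : ∀ {c}, ReflTransGen K.Adj a c → ReflTransGen (componentOf K a).Adj a c := by
    intro c h
    induction h with
    | refl => exact .refl
    | @tail c d hac hcd ih =>
      obtain ⟨e, he, hde⟩ := hcd
      exact ih.tail ⟨e, mem_componentOf_edges he hde hac, hde⟩
  refine ⟨componentOf_isSubgraph K a,
    ⟨⟨a, mem_componentOf_verts.mpr ⟨ha, .refl⟩⟩, fun u hu v hv => ?_⟩, fun e he u v hends hu => ?_⟩
  · exact (reach_symm (hreach (mem_componentOf_verts.mp hu).2)).trans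
      (hreach (mem_componentOf_verts.mp hv).2)
  · have hau := (mem_componentOf_verts.mp hu).2
    exact ⟨mem_componentOf_edges he hends hau,
      mem_componentOf_verts.mpr ⟨right_mem_verts he hends, hau.tail ⟨e, he, hends⟩⟩⟩

/-! ### Switching -/

def sym2Prod (χ : ℕ → ℤ) : Sym2 ℕ → ℤ :=
  Sym2.lift ⟨fun a b => χ a * χ b, fun _ _ => mul_comm _ _⟩

@[simp] lemma sym2Prod_mk (χ : ℕ → ℤ) (a b : ℕ) : sym2Prod χ s(a, b) = χ a * χ b := rfl

/-- Multiplicative handshake: each vertex of an even graph occurs an even number of times. -/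
lemma prod_sym2Prod_ends_eq_one (S : SignedGraph) {χ : ℕ → ℤ} (hχ : ∀ v, χ v = 1 ∨ χ v = -1)
    (heven : ∀ v, Even (S.degree v)) : ∏ e ∈ S.edges, sym2Prod χ (S.ends e) = 1 := by
  have hedge : ∀ e ∈ S.edges,
      sym2Prod χ (S.ends e) = ∏ v ∈ S.verts, χ v ^ S.incidence v e := by
    intro e he
    obtain ⟨a, b, hab⟩ := S.exists_ends_eq e
    rw [hab, sym2Prod_mk]
    simp only [incidence_eq hab, pow_add, pow_ite, pow_one, pow_zero, Finset.prod_mul_distrib,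
      Finset.prod_ite_eq', if_pos (left_mem_verts he hab), if_pos (right_mem_verts he hab)]
  rw [Finset.prod_congr rfl hedge, Finset.prod_comm]
  refine Finset.prod_eq_one fun v _ => ?_
  obtain ⟨k, hk⟩ := heven v
  rw [Finset.prod_pow_eq_pow_sum, ← degree_eq_sum_incidence, hk, ← two_mul, pow_mul, sq,
    sign_mul_self (hχ v), one_pow]

lemma prod_eq_prod_of_switch (S : SignedGraph) {χ : ℕ → ℤ} (hχ : ∀ v, χ v = 1 ∨ χ v = -1)
    (heven : ∀ v, Even (S.degree v)) {σ τ : ℕ → ℤ}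
    (hrel : ∀ e ∈ S.edges, σ e = sym2Prod χ (S.ends e) * τ e) :
    ∏ e ∈ S.edges, σ e = ∏ e ∈ S.edges, τ e := by
  rw [Finset.prod_congr rfl hrel, Finset.prod_mul_distrib,
    prod_sym2Prod_ends_eq_one S hχ heven, one_mul]

def IsBalancing (χ : ℕ → ℤ) (K : SignedGraph) : Prop :=
  ∀ e ∈ K.edges, ∀ u v, K.ends e = s(u, v) → χ u * χ v * K.sgn e = 1

lemma IsBalancing.sgn_eq {χ : ℕ → ℤ} {K : SignedGraph} (h : IsBalancing χ K)
    (hχ : ∀ v, χ v = 1 ∨ χ v = -1) {e u v : ℕ} (he : e ∈ K.edges)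
    (hends : K.ends e = s(u, v)) : K.sgn e = χ u * χ v := by
  have h1 := h e he u v hends
  calc K.sgn e = (χ u * χ u) * (χ v * χ v) * K.sgn e := by
        rw [sign_mul_self (hχ u), sign_mul_self (hχ v), one_mul, one_mul]
    _ = χ u * χ v * (χ u * χ v * K.sgn e) := by ring
    _ = χ u * χ v := by rw [h1, mul_one]

def switch (K : SignedGraph) (χ : ℕ → ℤ) (hχ : ∀ v, χ v = 1 ∨ χ v = -1) : SignedGraph where
  verts := K.verts
  edges := K.edges
  ends := K.ends
  sgn e := sym2Prod χ (K.ends e) * K.sgn e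
  ends_mem := K.ends_mem
  sgn_unit e he := by
    obtain ⟨a, b, hab⟩ := K.exists_ends_eq e
    rw [hab, sym2Prod_mk]
    exact sign_mul (sign_mul (hχ a) (hχ b)) (K.sgn_unit e he)

lemma sequiv_switch (K : SignedGraph) (χ : ℕ → ℤ) (hχ : ∀ v, χ v = 1 ∨ χ v = -1) :
    SEquiv K (K.switch χ hχ) :=
  ⟨rfl, rfl, fun _ _ => rfl, χ, hχ, fun e _ u v hends => by
    change sym2Prod χ (K.ends e) * K.sgn e = _
    rw [hends, sym2Prod_mk]⟩

lemma balanced_of_isBalancing {K : SignedGraph} {χ : ℕ → ℤ} (hχ : ∀ v, χ v = 1 ∨ χ v = -1)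
    (h : IsBalancing χ K) : K.Balanced := by
  refine ⟨K.switch χ hχ, sequiv_switch K χ hχ, Finset.card_eq_zero.mpr ?_⟩
  refine Finset.filter_eq_empty_iff.mpr fun e he => ?_
  obtain ⟨a, b, hab⟩ := K.exists_ends_eq e
  change ¬ sym2Prod χ (K.ends e) * K.sgn e = -1
  rw [hab, sym2Prod_mk, h e he a b hab]
  decide

lemma exists_isBalancing_of_balanced {K : SignedGraph} (h : K.Balanced) :
    ∃ χ : ℕ → ℤ, (∀ v, χ v = 1 ∨ χ v = -1) ∧ IsBalancing χ K := by
  obtain ⟨H, ⟨-, hE, -, χ, hχ, hsgn⟩, hcount⟩ := h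
  refine ⟨χ, hχ, fun e he u v hends => ?_⟩
  rw [← hsgn e he u v hends]
  have heH : e ∈ H.edges := hE ▸ he
  refine (H.sgn_unit e heH).resolve_right fun hneg => ?_
  have : e ∈ H.edges.filter (fun e => H.sgn e = -1) := Finset.mem_filter.mpr ⟨heH, hneg⟩
  rw [Finset.card_eq_zero.mp hcount] at this
  exact Finset.notMem_empty e this

lemma sequiv_refl (G : SignedGraph) : SEquiv G G :=
  ⟨rfl, rfl, fun _ _ => rfl, fun _ => 1, fun _ => Or.inl rfl,
    fun _ _ _ _ _ => by rw [one_mul, one_mul]⟩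

lemma negativeness_le {G H : SignedGraph} (h : SEquiv G H) :
    G.negativeness ≤ H.negEdgeCount :=
  Nat.sInf_le ⟨H, h, rfl⟩

lemma exists_sequiv_negEdgeCount_eq (G : SignedGraph) :
    ∃ H, SEquiv G H ∧ H.negEdgeCount = G.negativeness :=
  Nat.sInf_mem (s := {n | ∃ H, SEquiv G H ∧ H.negEdgeCount = n})
    ⟨G.negEdgeCount, G, sequiv_refl G, rfl⟩

/-- Switching `G` by a balancing of `G - e` leaves at most the edge `e` negative. -/
lemma balanced_of_balanced_deleteEdge {G : SignedGraph} (hneg : G.negativeness ≠ 1) {e : ℕ}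
    (h : (G.deleteEdge e).Balanced) : G.Balanced := by
  obtain ⟨χ, hχ, hbal⟩ := exists_isBalancing_of_balanced h
  have hsub : (G.switch χ hχ).edges.filter (fun f => (G.switch χ hχ).sgn f = -1) ⊆ {e} := by
    intro f hf
    obtain ⟨hfG, hfneg⟩ := Finset.mem_filter.mp hf
    rw [Finset.mem_singleton]
    by_contra hfe
    obtain ⟨a, b, hab⟩ := G.exists_ends_eq f
    have hpos : χ a * χ b * G.sgn f = 1 := hbal f (mem_deleteEdge_edges.mpr ⟨hfG, hfe⟩) a b hab
    change sym2Prod χ (G.ends f) * G.sgn f = -1 at hfneg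
    rw [hab, sym2Prod_mk, hpos] at hfneg
    exact absurd hfneg (by decide)
  have hle : G.negativeness ≤ 1 :=
    (negativeness_le (sequiv_switch G χ hχ)).trans (Finset.card_le_card hsub)
  obtain ⟨H, hH, hcount⟩ := exists_sequiv_negEdgeCount_eq G
  exact ⟨H, hH, by omega⟩

lemma sgnOf_eq_neg_one_pow (S : SignedGraph) : S.sgnOf = (-1 : ℤ) ^ S.negEdgeCount := by
  unfold sgnOf negEdgeCount
  rw [← Finset.prod_filter_mul_prod_filter_not S.edges (fun e => S.sgn e = -1),
    Finset.prod_congr rfl (fun e he => (Finset.mem_filter.mp he).2), Finset.prod_const,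
    Finset.prod_eq_one fun e he => ?_, mul_one]
  obtain ⟨he, hne⟩ := Finset.mem_filter.mp he
  exact (S.sgn_unit e he).resolve_right hne

lemma negEdgeCount_odd_iff (S : SignedGraph) : S.negEdgeCount % 2 = 1 ↔ S.sgnOf = -1 := by
  rw [sgnOf_eq_neg_one_pow, ← Nat.odd_iff, neg_one_pow_eq_neg_one_iff_odd (by decide)]

lemma negEdgeCount_even_iff (S : SignedGraph) : S.negEdgeCount % 2 = 0 ↔ S.sgnOf = 1 := by
  rw [sgnOf_eq_neg_one_pow, ← Nat.even_iff, neg_one_pow_eq_one_iff_even (by decide)]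

lemma sgnOf_eq_one_of_balanced {H C : SignedGraph} (hbal : H.Balanced)
    (hsub : IsSubgraph C H) (heven : ∀ v, Even (C.degree v)) : C.sgnOf = 1 := by
  obtain ⟨χ, hχ, hpos⟩ := exists_isBalancing_of_balanced hbal
  refine (C.prod_eq_prod_of_switch hχ heven (τ := fun _ => 1) fun e he => ?_).trans
    Finset.prod_const_one
  obtain ⟨a, b, hab⟩ := C.exists_ends_eq e
  rw [hab, sym2Prod_mk, mul_one, hsub.sgn_eq he]
  exact hpos.sgn_eq hχ (hsub.mem_edges he) ((hsub.ends_eq he).symm.trans hab)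

lemma prod_sgn_eq_sgnOf_of_sequiv {G H C : SignedGraph} (hseq : SEquiv G H)
    (hsub : IsSubgraph C G) (heven : ∀ v, Even (C.degree v)) :
    ∏ e ∈ C.edges, H.sgn e = C.sgnOf := by
  obtain ⟨-, -, -, χ, hχ, hsgn⟩ := hseq
  refine C.prod_eq_prod_of_switch hχ heven fun e he => ?_
  obtain ⟨a, b, hab⟩ := C.exists_ends_eq e
  rw [hab, sym2Prod_mk, hsub.sgn_eq he]
  exact hsgn e (hsub.mem_edges he) a b ((hsub.ends_eq he).symm.trans hab)

/-! ### Necessity -/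

lemma coverable_iff {G : SignedGraph} :
    G.Coverable ↔ ∀ e ∈ G.edges, ∃ S, IsSubgraph S G ∧ IsSignedCircuit S ∧ e ∈ S.edges := by
  constructor
  · rintro ⟨F, hF, hcover⟩ e he
    obtain ⟨S, hS⟩ := Multiset.card_pos_iff_exists_mem.mp (hcover e he)
    obtain ⟨hSF, heS⟩ := Multiset.mem_filter.mp hS
    exact ⟨S, (hF S hSF).1, (hF S hSF).2, heS⟩
  · intro h
    choose S hSsub hS hmem using h
    refine ⟨G.edges.attach.val.map fun e => S e.1 e.2, ?_, fun e he => ?_⟩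
    · simp only [Multiset.mem_map]
      rintro _ ⟨e, -, rfl⟩
      exact ⟨hSsub e.1 e.2, hS e.1 e.2⟩
    · refine Multiset.card_pos_iff_exists_mem.mpr ⟨S e he, Multiset.mem_filter.mpr ⟨?_, hmem e he⟩⟩
      exact Multiset.mem_map.mpr ⟨⟨e, he⟩, Finset.mem_attach _ _, rfl⟩

lemma sgnOf_eq_of_negEdges_eq_singleton {G H C : SignedGraph} (hseq : SEquiv G H) {f : ℕ}
    (hf : H.edges.filter (fun e => H.sgn e = -1) = {f}) (hsub : IsSubgraph C G)
    (heven : ∀ v, Even (C.degree v)) :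
    C.sgnOf = if f ∈ C.edges then -1 else 1 := by
  rw [← prod_sgn_eq_sgnOf_of_sequiv hseq hsub heven]
  have hpos : ∀ e ∈ C.edges, e ≠ f → H.sgn e = 1 := by
    intro e he hef
    have heH : e ∈ H.edges := hseq.2.1 ▸ hsub.mem_edges he
    refine (H.sgn_unit e heH).resolve_right fun hneg => hef ?_
    have : e ∈ H.edges.filter (fun e => H.sgn e = -1) := Finset.mem_filter.mpr ⟨heH, hneg⟩
    rwa [hf, Finset.mem_singleton] at this
  split_ifs with hfC
  · rw [Finset.prod_eq_single f hpos (absurd hfC)]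
    have : f ∈ H.edges.filter (fun e => H.sgn e = -1) := hf ▸ Finset.mem_singleton_self f
    exact (Finset.mem_filter.mp this).2
  · exact Finset.prod_eq_one fun e he => hpos e he (ne_of_mem_of_not_mem he hfC)

theorem negativeness_ne_one_of_coverable {G : SignedGraph} (hcov : G.Coverable) :
    G.negativeness ≠ 1 := by
  intro hneg
  obtain ⟨H, hseq, hcount⟩ := exists_sequiv_negEdgeCount_eq G
  rw [hneg] at hcount
  obtain ⟨f, hf⟩ := Finset.card_eq_one.mp hcount
  have hfG : f ∈ G.edges :=
    hseq.2.1 ▸ (Finset.mem_filter.mp (hf ▸ Finset.mem_singleton_self f)).1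
  obtain ⟨S, hSsub, hS, hfS⟩ := coverable_iff.mp hcov f hfG
  rcases hS with ⟨hC, hbal⟩ | ⟨_, _, _, C₁, C₂, -, hC₁, hC₂, hU, -, -, -, -, -, hdisj⟩
  · have h := sgnOf_eq_of_negEdges_eq_singleton hseq hf hSsub hC.even_degree
    rw [if_pos hfS, (negEdgeCount_even_iff S).mp hbal] at h
    exact absurd h (by decide)
  · have hmem : ∀ C, IsSubgraph C S → IsUnbalancedCircuit C → f ∈ C.edges := by
      intro C hCS hCU
      by_contra hfC
      have h := sgnOf_eq_of_negEdges_eq_singleton hseq hf (hCS.trans hSsub) hCU.1.even_degree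
      rw [if_neg hfC, (negEdgeCount_odd_iff C).mp hCU.2] at h
      exact absurd h (by decide)
    have : f ∈ C₁.edges ∩ C₂.edges :=
      Finset.mem_inter.mpr ⟨hmem C₁ hU.2.1 hC₁, hmem C₂ hU.2.2.1 hC₂⟩
    simp [hdisj] at this

lemma not_balanced_of_unbalancedCircuit {H C : SignedGraph} (hsub : IsSubgraph C H)
    (hC : IsUnbalancedCircuit C) : ¬ H.Balanced := fun hbal => by
  have h := sgnOf_eq_one_of_balanced hbal hsub hC.1.even_degree
  rw [(negEdgeCount_odd_iff C).mp hC.2] at h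
  exact absurd h (by decide)

theorem not_exists_balanced_component_of_coverable {G : SignedGraph} (hconn : G.Connected)
    (hcov : G.Coverable) :
    ¬ ∃ b, G.IsCutEdge b ∧ ∃ H, IsComponent (G.deleteEdge b) H ∧ H.Balanced := by
  rintro ⟨b, hcut, H, hH, hbal⟩
  obtain ⟨hbG, u, v, hends, hnr⟩ := id hcut
  obtain ⟨S, hSsub, hS, hbS⟩ := coverable_iff.mp hcov b hbG
  rcases hS with ⟨hC, -⟩ | ⟨x, y, P, C₁, C₂, hP, hC₁, hC₂, hU, hx, hy, -, -, -, -⟩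
  · exact hcut.not_mem_circuit hC hSsub hbS
  have hPG := hU.1.trans hSsub
  have hbP : b ∈ P.edges := by
    rw [hU.2.2.2.2] at hbS
    simp only [Finset.mem_union] at hbS
    rcases hbS with (h | h) | h
    · exact h
    · exact absurd h (hcut.not_mem_circuit hC₁.1 (hU.2.1.trans hSsub))
    · exact absurd h (hcut.not_mem_circuit hC₂.1 (hU.2.2.1.trans hSsub))
  have hoff : ∀ C z, IsSubgraph C S → IsUnbalancedCircuit C → z ∈ C.verts → z ∉ H.verts := by
    intro C z hCS hCU hzC hzH
    have hCG := hCS.trans hSsub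
    exact not_balanced_of_unbalancedCircuit (hH.isSubgraph_of_connected
      (hCG.deleteEdge_of_not_mem (hcut.not_mem_circuit hCU.1 hCG)) hCU.1.1 hzC hzH) hCU hbal
  have hend : ∀ w w', G.ends b = s(w, w') → ¬ ReflTransGen (G.deleteEdge b).Adj w w' →
      w ∉ H.verts := by
    intro w w' hww' hnr' hwH
    have hreach := fun z (h : ReflTransGen (P.deleteEdge b).Adj w z) =>
      hH.mem_verts_of_reach hwH (reach_mono (hPG.deleteEdge b) h)
    rcases hP.reach_end_deleteEdge hbP ((hPG.ends_eq hbP).trans hww')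
      (fun h => hnr' (reach_mono (hPG.deleteEdge b) h)) with h | h
    · exact hoff C₁ x hU.2.1 hC₁ (Finset.mem_inter.mp (hx ▸ Finset.mem_singleton_self x)).2
        (hreach x h)
    · exact hoff C₂ y hU.2.2.1 hC₂ (Finset.mem_inter.mp (hy ▸ Finset.mem_singleton_self y)).2
        (hreach y h)
  rcases hH.mem_ends_of_deleteEdge hconn hbG hends with hu | hv
  · exact hend u v hends hnr hu
  · exact hend v u (hends.trans Sym2.eq_swap) (fun h => hnr (reach_symm h)) hv

/-! ### Walks and cycles -/

/-- A walk from `x` to `y` with vertex list `vs` and edge list `es`. -/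
inductive Walk (G : SignedGraph) : ℕ → ℕ → List ℕ → List ℕ → Prop
  | nil (v : ℕ) (hv : v ∈ G.verts) : Walk G v v [v] []
  | cons {v w : ℕ} {vs es : List ℕ} (u e : ℕ) (he : e ∈ G.edges)
      (hd : G.ends e = s(u, v)) (h : Walk G v w vs es) : Walk G u w (u :: vs) (e :: es)

namespace Walk

variable {G : SignedGraph} {x y z : ℕ} {vs es : List ℕ}

theorem verts_mem (h : Walk G x y vs es) : ∀ v ∈ vs, v ∈ G.verts := by
  induction h with
  | nil v hv => simpa using hv
  | cons u e he hd _ ih =>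
    simpa [left_mem_verts he hd] using ih

theorem edges_mem (h : Walk G x y vs es) : ∀ e ∈ es, e ∈ G.edges := by
  induction h with
  | nil => simp
  | cons u e he hd _ ih => simpa [he] using ih

theorem exists_eq_cons (h : Walk G x y vs es) : ∃ t, vs = x :: t := by
  cases h with
  | nil => exact ⟨[], rfl⟩
  | cons => exact ⟨_, rfl⟩

theorem start_mem (h : Walk G x y vs es) : x ∈ vs := by
  obtain ⟨t, rfl⟩ := h.exists_eq_cons
  exact List.mem_cons_self

theorem end_mem (h : Walk G x y vs es) : y ∈ vs := by
  induction h with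
  | nil => simp
  | cons _ _ _ _ _ ih => exact List.mem_cons_of_mem _ ih

theorem mem_of_mem_ends (h : Walk G x y vs es) : ∀ e ∈ es, ∀ w ∈ G.ends e, w ∈ vs := by
  induction h with
  | nil => simp
  | cons u e _ hd h ih =>
    intro f hf w hw
    rcases List.mem_cons.mp hf with rfl | hf
    · rw [hd, Sym2.mem_iff] at hw
      rcases hw with rfl | rfl
      · exact List.mem_cons_self
      · exact List.mem_cons_of_mem _ h.start_mem
    · exact List.mem_cons_of_mem _ (ih f hf w hw)

theorem not_mem_edges_of_cons (h : Walk G x y vs es) {u e : ℕ} (hd : G.ends e = s(u, x))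
    (hu : u ∉ vs) : e ∉ es :=
  fun he => hu (h.mem_of_mem_ends e he u (by simp [hd]))

theorem nodup_edges (h : Walk G x y vs es) (hnd : vs.Nodup) : es.Nodup := by
  induction h with
  | nil => simp
  | cons u e _ hd h ih =>
    rw [List.nodup_cons] at hnd
    exact List.nodup_cons.mpr ⟨h.not_mem_edges_of_cons hd hnd.1, ih hnd.2⟩

theorem mono {H : SignedGraph} (h : Walk G x y vs es)
    (hV : ∀ v ∈ vs, v ∈ H.verts) (hE : ∀ e ∈ es, e ∈ H.edges)
    (hEnds : ∀ e ∈ es, H.ends e = G.ends e) : Walk H x y vs es := by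
  induction h with
  | nil v _ => exact nil v (hV v List.mem_cons_self)
  | cons u e _ hd _ ih =>
    refine cons u e (hE e List.mem_cons_self) ((hEnds e List.mem_cons_self).trans hd) (ih ?_ ?_ ?_)
    · exact fun w hw => hV w (List.mem_cons_of_mem _ hw)
    · exact fun f hf => hE f (List.mem_cons_of_mem _ hf)
    · exact fun f hf => hEnds f (List.mem_cons_of_mem _ hf)

theorem of_isSubgraph {H : SignedGraph} (hsub : IsSubgraph G H) (h : Walk G x y vs es) :
    Walk H x y vs es :=
  h.mono (fun v hv => hsub.mem_verts (h.verts_mem v hv))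
    (fun e he => hsub.mem_edges (h.edges_mem e he))
    (fun e he => (hsub.ends_eq (h.edges_mem e he)).symm)

theorem reach (h : Walk G x y vs es) : ReflTransGen G.Adj x y := by
  induction h with
  | nil => exact .refl
  | cons u e he hd _ ih => exact ReflTransGen.head ⟨e, he, hd⟩ ih

theorem exists_of_reach (hy : y ∈ G.verts) (h : ReflTransGen G.Adj x y) :
    ∃ vs es, Walk G x y vs es := by
  induction h using ReflTransGen.head_induction_on with
  | refl => exact ⟨[y], [], nil y hy⟩
  | head hadj _ ih =>
    obtain ⟨vs, es, hw⟩ := ih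
    obtain ⟨e, he, hd⟩ := hadj
    exact ⟨_, _, cons _ e he hd hw⟩

theorem snoc (h : Walk G x y vs es) {e : ℕ} (he : e ∈ G.edges) (hd : G.ends e = s(y, z)) :
    Walk G x z (vs ++ [z]) (es ++ [e]) := by
  induction h with
  | nil v _ => exact cons v e he hd (nil z (right_mem_verts he hd))
  | cons u f hf hdf _ ih => exact cons u f hf hdf (ih hd)

theorem reverse (h : Walk G x y vs es) : Walk G y x vs.reverse es.reverse := by
  induction h with
  | nil v hv => exact nil v hv
  | cons u e he hd _ ih =>
    simpa only [List.reverse_cons] using ih.snoc he (hd.trans Sym2.eq_swap)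

theorem append {vs' es' : List ℕ} (h : Walk G x y vs es) (h' : Walk G y z vs' es') :
    Walk G x z (vs ++ vs'.tail) (es ++ es') := by
  induction h with
  | nil =>
    obtain ⟨t, rfl⟩ := h'.exists_eq_cons
    exact h'
  | cons u e he hd _ ih => exact cons u e he hd (ih h')

theorem append_nodup {vs' es' : List ℕ} (h : Walk G x y vs es) (h' : Walk G y z vs' es')
    (hnd : vs.Nodup) (hnd' : vs'.Nodup) (hdisj : ∀ w ∈ vs, w ∈ vs' → w = y) :
    (vs ++ vs'.tail).Nodup := by
  obtain ⟨t, rfl⟩ := h'.exists_eq_cons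
  refine hnd.append (List.nodup_cons.mp hnd').2 fun w hw hwt => ?_
  obtain rfl := hdisj w hw (List.mem_cons_of_mem _ hwt)
  exact (List.nodup_cons.mp hnd').1 hwt

theorem exists_suffix (h : Walk G x y vs es) {u : ℕ} (hu : u ∈ vs) :
    ∃ vs' es', Walk G u y vs' es' ∧ vs' <:+ vs ∧ ∀ e ∈ es', e ∈ es := by
  induction h with
  | nil v hv =>
    obtain rfl := List.mem_singleton.mp hu
    exact ⟨[u], [], nil u hv, List.suffix_refl _, by simp⟩
  | @cons v _ vs₀ es₀ u' e he hd h ih =>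
    rcases List.mem_cons.mp hu with rfl | hu
    · exact ⟨u :: vs₀, e :: es₀, cons u e he hd h, List.suffix_refl _, fun _ h => h⟩
    · obtain ⟨vs', es', hw, hsuf, hes⟩ := ih hu
      exact ⟨vs', es', hw, hsuf.trans (List.suffix_cons _ _),
        fun f hf => List.mem_cons_of_mem _ (hes f hf)⟩

theorem reach_of_mem (h : Walk G x y vs es) {w : ℕ} (hw : w ∈ vs) : ReflTransGen G.Adj x w := by
  obtain ⟨_, _, hw', _, _⟩ := h.reverse.exists_suffix (List.mem_reverse.mpr hw)
  exact reach_symm hw'.reach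

theorem exists_nodup (h : Walk G x y vs es) : ∃ vs' es', Walk G x y vs' es' ∧ vs'.Nodup ∧
    (∀ v ∈ vs', v ∈ vs) ∧ ∀ e ∈ es', e ∈ es := by
  induction h with
  | nil v hv => exact ⟨[v], [], nil v hv, by simp, by simp, by simp⟩
  | cons u e he hd h ih =>
    obtain ⟨vs₂, es₂, hw, hnd, hvmem, hemem⟩ := ih
    by_cases hu : u ∈ vs₂
    · obtain ⟨vs₃, es₃, hw₃, hsuf, hes₃⟩ := hw.exists_suffix hu
      exact ⟨vs₃, es₃, hw₃, hnd.sublist hsuf.sublist,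
        fun w hw' => List.mem_cons_of_mem _ (hvmem w (hsuf.subset hw')),
        fun f hf => List.mem_cons_of_mem _ (hemem f (hes₃ f hf))⟩
    · refine ⟨u :: vs₂, e :: es₂, cons u e he hd hw, List.nodup_cons.mpr ⟨hu, hnd⟩, ?_, ?_⟩
      · simpa using fun w hw' => Or.inr (hvmem w hw')
      · simpa using fun f hf => Or.inr (hemem f hf)

theorem split_first (h : Walk G x y vs es) (S : Finset ℕ) (hhit : ∃ w ∈ vs, w ∈ S) :
    ∃ z p q p' q', Walk G x z p q ∧ Walk G z y p' q' ∧ vs = p ++ p'.tail ∧ es = q ++ q' ∧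
      z ∈ S ∧ (∀ w ∈ p, w ∈ S → w = z) ∧ p' <:+ vs := by
  induction h with
  | nil v hv =>
    obtain ⟨w, hw, hwS⟩ := hhit
    obtain rfl := List.mem_singleton.mp hw
    exact ⟨w, [w], [], [w], [], nil w hv, nil w hv, by simp, by simp, hwS,
      by simp +contextual, List.suffix_refl _⟩
  | @cons v _ vs₀ es₀ u e he hd h ih =>
    by_cases hu : u ∈ S
    · exact ⟨u, [u], [], u :: vs₀, e :: es₀, nil u (left_mem_verts he hd),
        cons u e he hd h, by simp, by simp, hu, by simp +contextual, List.suffix_refl _⟩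
    · have hhit' : ∃ w ∈ vs₀, w ∈ S := by
        obtain ⟨w, hw, hwS⟩ := hhit
        rcases List.mem_cons.mp hw with rfl | hw
        · exact absurd hwS hu
        · exact ⟨w, hw, hwS⟩
      obtain ⟨z, p, q, p', q', hw₁, hw₂, hveq, heeq, hzS, honly, hsuf⟩ := ih hhit'
      obtain ⟨t, rfl⟩ := hw₁.exists_eq_cons
      refine ⟨z, u :: v :: t, e :: q, p', q', cons u e he hd hw₁, hw₂, by simp [hveq],
        by simp [heeq], hzS, ?_, hsuf.trans (List.suffix_cons _ _)⟩
      intro w hw hwS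
      rcases List.mem_cons.mp hw with rfl | hw
      · exact absurd hwS hu
      · exact honly w hw hwS

theorem ends_ne_of_nodup (h : Walk G x y vs es) (hnd : vs.Nodup) :
    ∀ e ∈ es, ∃ a b, G.ends e = s(a, b) ∧ a ∈ vs ∧ b ∈ vs ∧ a ≠ b := by
  induction h with
  | nil => simp
  | cons u e _ hd h ih =>
    rw [List.nodup_cons] at hnd
    intro f hf
    rcases List.mem_cons.mp hf with rfl | hf
    · exact ⟨u, _, hd, List.mem_cons_self, List.mem_cons_of_mem _ h.start_mem,
        fun hu => hnd.1 (hu ▸ h.start_mem)⟩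
    · obtain ⟨a, b, h₁, h₂, h₃, h₄⟩ := ih hnd.2 f hf
      exact ⟨a, b, h₁, List.mem_cons_of_mem _ h₂, List.mem_cons_of_mem _ h₃, h₄⟩

theorem eq_of_nodup_of_nil (h : Walk G x y vs es) (hnd : vs.Nodup) (hxy : x = y) :
    es = [] ∧ vs = [x] := by
  cases h with
  | nil => exact ⟨rfl, rfl⟩
  | cons _ _ _ _ h =>
    subst hxy
    exact absurd h.end_mem (List.nodup_cons.mp hnd).1

theorem prod_sgn_of_isBalancing {χ : ℕ → ℤ} (hχ : ∀ v, χ v = 1 ∨ χ v = -1)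
    (hbal : IsBalancing χ G) (h : Walk G x y vs es) : (es.map G.sgn).prod = χ x * χ y := by
  induction h with
  | nil v _ => simp [sign_mul_self (hχ v)]
  | @cons v w _ _ u e he hd _ ih =>
    rw [List.map_cons, List.prod_cons, ih, hbal.sgn_eq hχ he hd]
    calc χ u * χ v * (χ v * χ w) = χ v * χ v * (χ u * χ w) := by ring
      _ = χ u * χ w := by rw [sign_mul_self (hχ v), one_mul]

/-- Degree count along a path, in a form valid also for the trivial path. -/
theorem sum_incidence_add (h : Walk G x y vs es) (hnd : vs.Nodup) (v : ℕ) :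
    ∑ e ∈ es.toFinset, G.incidence v e + (if v = x then 1 else 0) + (if v = y then 1 else 0) =
      2 * (if v ∈ vs then 1 else 0) := by
  induction h with
  | nil w _ =>
    by_cases hv : v = w <;> simp [hv]
  | @cons v' w vs₀ es₀ u e _ hd h ih =>
    rw [List.nodup_cons] at hnd
    have ih := ih hnd.2
    rw [List.toFinset_cons, Finset.sum_insert (by simpa using h.not_mem_edges_of_cons hd hnd.1),
      incidence_eq hd]
    by_cases hvu : v = u
    · subst hvu
      have hv' : v ≠ v' := fun hv => hnd.1 (hv ▸ h.start_mem)
      have hw : v ≠ w := fun hv => hnd.1 (hv ▸ h.end_mem)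
      simp only [hv', hw, hnd.1, if_false, if_true, List.mem_cons_self] at ih ⊢
      omega
    · simp only [hvu, List.mem_cons, false_or, if_false] at ih ⊢
      omega

end Walk

section

variable {G : SignedGraph} {x y : ℕ} {vs es : List ℕ} {f : ℕ}

def walkGraph (G : SignedGraph) (h : Walk G x y vs es) : SignedGraph where
  verts := vs.toFinset
  edges := es.toFinset
  ends := G.ends
  sgn := G.sgn
  ends_mem e he w hw := List.mem_toFinset.mpr (h.mem_of_mem_ends e (List.mem_toFinset.mp he) w hw)
  sgn_unit e he := G.sgn_unit e (h.edges_mem e (List.mem_toFinset.mp he))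

lemma walkGraph_isSubgraph (h : Walk G x y vs es) : IsSubgraph (walkGraph G h) G :=
  ⟨fun v hv => h.verts_mem v (List.mem_toFinset.mp hv),
    fun e he => h.edges_mem e (List.mem_toFinset.mp he), fun _ _ => ⟨rfl, rfl⟩⟩

lemma walkGraph_connected (h : Walk G x y vs es) : (walkGraph G h).Connected := by
  have hW : Walk (walkGraph G h) x y vs es :=
    h.mono (fun v hv => List.mem_toFinset.mpr hv) (fun e he => List.mem_toFinset.mpr he)
      (fun _ _ => rfl)
  refine ⟨⟨x, List.mem_toFinset.mpr h.start_mem⟩, fun u hu v hv => ?_⟩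
  exact (reach_symm (hW.reach_of_mem (List.mem_toFinset.mp hu))).trans
    (hW.reach_of_mem (List.mem_toFinset.mp hv))

lemma walkGraph_isPath (h : Walk G x y vs es) (hnd : vs.Nodup) : IsPath (walkGraph G h) x y := by
  by_cases hxy : x = y
  · obtain ⟨rfl, rfl⟩ := h.eq_of_nodup_of_nil hnd hxy
    exact Or.inl ⟨hxy, by simp [walkGraph], rfl⟩
  have hdeg := h.sum_incidence_add hnd
  refine Or.inr ⟨hxy, walkGraph_connected h, List.mem_toFinset.mpr h.start_mem,
    List.mem_toFinset.mpr h.end_mem, ?_, ?_, fun v hv hvx hvy => ?_⟩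
  · have := hdeg x
    simp only [if_pos h.start_mem, if_neg hxy, if_true] at this
    change ∑ e ∈ es.toFinset, G.incidence x e = 1
    omega
  · have := hdeg y
    simp only [if_pos h.end_mem, if_neg (Ne.symm hxy), if_true] at this
    change ∑ e ∈ es.toFinset, G.incidence y e = 1
    omega
  · have := hdeg v
    simp only [if_pos (List.mem_toFinset.mp hv), if_neg hvx, if_neg hvy] at this
    change ∑ e ∈ es.toFinset, G.incidence v e = 2
    omega

lemma prod_sgn_sign (hes : ∀ e ∈ es, e ∈ G.edges) :
    (es.map G.sgn).prod = 1 ∨ (es.map G.sgn).prod = -1 :=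
  sign_list_prod fun _ hs => by
    obtain ⟨e, he, rfl⟩ := List.mem_map.mp hs
    exact G.sgn_unit e (hes e he)

lemma prod_sgn_of_isSubgraph {H : SignedGraph} (hsub : IsSubgraph H G)
    (hes : ∀ e ∈ es, e ∈ H.edges) :
    (es.map H.sgn).prod = (es.map G.sgn).prod :=
  congrArg List.prod (List.map_congr_left fun e he => hsub.sgn_eq (hes e he))

/-- The walk `vs` from `x` to `y`, closed up by the edge `f`. -/
structure IsCycle (G : SignedGraph) (x y : ℕ) (vs es : List ℕ) (f : ℕ) : Prop where
  walk : Walk G x y vs es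
  nodup : vs.Nodup
  mem_edges : f ∈ G.edges
  not_mem : f ∉ es
  ends : G.ends f = s(y, x)

def cycleSign (G : SignedGraph) (es : List ℕ) (f : ℕ) : ℤ := G.sgn f * (es.map G.sgn).prod

lemma IsCycle.cycleSign_sign (hc : G.IsCycle x y vs es f) :
    G.cycleSign es f = 1 ∨ G.cycleSign es f = -1 :=
  sign_mul (G.sgn_unit f hc.mem_edges) (prod_sgn_sign hc.walk.edges_mem)

lemma IsCycle.of_isSubgraph {H : SignedGraph} (hsub : IsSubgraph H G)
    (hc : H.IsCycle x y vs es f) : G.IsCycle x y vs es f :=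
  ⟨hc.walk.of_isSubgraph hsub, hc.nodup, hsub.mem_edges hc.mem_edges, hc.not_mem,
    (hsub.ends_eq hc.mem_edges).symm.trans hc.ends⟩

lemma IsCycle.cycleSign_of_isSubgraph {H : SignedGraph} (hsub : IsSubgraph H G)
    (hc : H.IsCycle x y vs es f) : H.cycleSign es f = G.cycleSign es f := by
  rw [cycleSign, cycleSign, hsub.sgn_eq hc.mem_edges,
    prod_sgn_of_isSubgraph hsub hc.walk.edges_mem]

def cycleGraph (hc : G.IsCycle x y vs es f) : SignedGraph where
  verts := vs.toFinset
  edges := insert f es.toFinset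
  ends := G.ends
  sgn := G.sgn
  ends_mem e he w hw := by
    rcases Finset.mem_insert.mp he with rfl | he
    · rw [hc.ends, Sym2.mem_iff] at hw
      rcases hw with rfl | rfl
      · exact List.mem_toFinset.mpr hc.walk.end_mem
      · exact List.mem_toFinset.mpr hc.walk.start_mem
    · exact List.mem_toFinset.mpr (hc.walk.mem_of_mem_ends e (List.mem_toFinset.mp he) w hw)
  sgn_unit e he := by
    rcases Finset.mem_insert.mp he with rfl | he
    · exact G.sgn_unit e hc.mem_edges
    · exact G.sgn_unit e (hc.walk.edges_mem e (List.mem_toFinset.mp he))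

namespace IsCycle

variable (hc : G.IsCycle x y vs es f)
include hc

lemma cycleGraph_isSubgraph : IsSubgraph (cycleGraph hc) G := by
  refine ⟨fun v hv => hc.walk.verts_mem v (List.mem_toFinset.mp hv), fun e he => ?_,
    fun _ _ => ⟨rfl, rfl⟩⟩
  rcases Finset.mem_insert.mp he with rfl | he
  · exact hc.mem_edges
  · exact hc.walk.edges_mem e (List.mem_toFinset.mp he)

lemma closing_mem_cycleGraph : f ∈ (cycleGraph hc).edges := Finset.mem_insert_self _ _

lemma cycleGraph_isCircuit : IsCircuit (cycleGraph hc) := by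
  have hW : Walk (cycleGraph hc) x y vs es :=
    hc.walk.mono (fun v hv => List.mem_toFinset.mpr hv)
      (fun e he => Finset.mem_insert_of_mem (List.mem_toFinset.mpr he)) (fun _ _ => rfl)
  refine ⟨⟨⟨x, List.mem_toFinset.mpr hc.walk.start_mem⟩, fun u hu v hv => ?_⟩,
    ⟨f, hc.closing_mem_cycleGraph⟩, fun v hv => ?_⟩
  · exact (reach_symm (hW.reach_of_mem (List.mem_toFinset.mp hu))).trans
      (hW.reach_of_mem (List.mem_toFinset.mp hv))
  · have h := hc.walk.sum_incidence_add hc.nodup v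
    have hdeg : (cycleGraph hc).degree v = G.incidence v f + ∑ e ∈ es.toFinset, G.incidence v e :=
      Finset.sum_insert (by simpa using hc.not_mem)
    rw [hdeg, incidence_eq hc.ends]
    rw [if_pos (List.mem_toFinset.mp hv)] at h
    omega

lemma cycleGraph_sgnOf : (cycleGraph hc).sgnOf = G.cycleSign es f := by
  change ∏ e ∈ insert f es.toFinset, G.sgn e = _
  rw [Finset.prod_insert (by simpa using hc.not_mem),
    List.prod_toFinset _ (hc.walk.nodup_edges hc.nodup)]
  rfl

lemma cycleGraph_isUnbalancedCircuit (hsgn : G.cycleSign es f = -1) :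
    IsUnbalancedCircuit (cycleGraph hc) :=
  ⟨hc.cycleGraph_isCircuit, (negEdgeCount_odd_iff _).mpr (hc.cycleGraph_sgnOf.trans hsgn)⟩

lemma cycleGraph_isBalancedCircuit (hsgn : G.cycleSign es f = 1) :
    IsBalancedCircuit (cycleGraph hc) :=
  ⟨hc.cycleGraph_isCircuit, (negEdgeCount_even_iff _).mpr (hc.cycleGraph_sgnOf.trans hsgn)⟩

end IsCycle

/-! ### Balance from the signs of cycles -/

def AllCyclesPositive (K : SignedGraph) : Prop :=
  ∀ x y vs es f, K.IsCycle x y vs es f → K.cycleSign es f = 1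

lemma AllCyclesPositive.mono {K H : SignedGraph} (h : AllCyclesPositive K)
    (hsub : IsSubgraph H K) : AllCyclesPositive H := fun x y vs es f hc =>
  (hc.cycleSign_of_isSubgraph hsub).trans (h x y vs es f (hc.of_isSubgraph hsub))

lemma isBalancing_iff {χ : ℕ → ℤ} {K : SignedGraph} :
    IsBalancing χ K ↔ ∀ e ∈ K.edges, sym2Prod χ (K.ends e) * K.sgn e = 1 := by
  refine ⟨fun h e he => ?_, fun h e he u v hends => ?_⟩
  · obtain ⟨a, b, hab⟩ := K.exists_ends_eq e
    rw [hab, sym2Prod_mk]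
    exact h e he a b hab
  · rw [← sym2Prod_mk, ← hends]
    exact h e he

lemma IsBalancing.of_deleteEdge_of_reach {K : SignedGraph} (hK : AllCyclesPositive K)
    {χ : ℕ → ℤ} (hχ : ∀ v, χ v = 1 ∨ χ v = -1) (hbal : IsBalancing χ (K.deleteEdge b))
    {a c : ℕ} (hb : b ∈ K.edges) (hac : K.ends b = s(a, c))
    (hr : ReflTransGen (K.deleteEdge b).Adj c a) : IsBalancing χ K := by
  obtain ⟨vs₀, es₀, hw₀⟩ :=
    Walk.exists_of_reach (G := K.deleteEdge b) (left_mem_verts (G := K) hb hac) hr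
  obtain ⟨vs, es, hw, hnd, -, -⟩ := hw₀.exists_nodup
  have hc : K.IsCycle c a vs es b := ⟨hw.of_isSubgraph (deleteEdge_isSubgraph K b), hnd, hb,
    fun hbes => (mem_deleteEdge_edges.mp (hw.edges_mem b hbes)).2 rfl, hac⟩
  have hpos : K.sgn b * (χ c * χ a) = 1 := by
    rw [← hw.prod_sgn_of_isBalancing hχ hbal]
    exact hK c a vs es b hc
  refine isBalancing_iff.mpr fun e he => ?_
  by_cases heb : e = b
  · subst heb
    rw [hac, sym2Prod_mk, ← hpos]
    ring
  · exact isBalancing_iff.mp hbal e (mem_deleteEdge_edges.mpr ⟨he, heb⟩)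

/-- If `b` is a bridge, flipping the balancing of `K - b` on one side fixes the sign of `b`. -/
lemma IsBalancing.of_deleteEdge_of_not_reach {K : SignedGraph} {χ : ℕ → ℤ}
    (hχ : ∀ v, χ v = 1 ∨ χ v = -1) (hbal : IsBalancing χ (K.deleteEdge b))
    {a c : ℕ} (hb : b ∈ K.edges) (hac : K.ends b = s(a, c))
    (hr : ¬ ReflTransGen (K.deleteEdge b).Adj c a) :
    ∃ χ' : ℕ → ℤ, (∀ v, χ' v = 1 ∨ χ' v = -1) ∧ IsBalancing χ' K := by
  classical
  set d := χ a * χ c * K.sgn b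
  have hd : d = 1 ∨ d = -1 := sign_mul (sign_mul (hχ a) (hχ c)) (K.sgn_unit b hb)
  set χ' : ℕ → ℤ := fun v => if ReflTransGen (K.deleteEdge b).Adj c v then d * χ v else χ v
  refine ⟨χ', fun v => ?_, isBalancing_iff.mpr fun e he => ?_⟩
  · by_cases hv : ReflTransGen (K.deleteEdge b).Adj c v
    · simpa [χ', hv] using sign_mul hd (hχ v)
    · simpa [χ', hv] using hχ v
  obtain ⟨u, v, huv⟩ := K.exists_ends_eq e
  rw [huv, sym2Prod_mk]
  by_cases heb : e = b
  · subst heb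
    obtain ⟨rfl, rfl⟩ | ⟨rfl, rfl⟩ := Sym2.eq_iff.mp (huv.symm.trans hac)
    · simp only [χ', hr, if_false, if_pos ReflTransGen.refl]
      calc χ u * (d * χ v) * K.sgn e = d * d := by ring
        _ = 1 := sign_mul_self hd
    · simp only [χ', hr, if_false, if_pos ReflTransGen.refl]
      calc d * χ u * χ v * K.sgn e = d * d := by ring
        _ = 1 := sign_mul_self hd
  · have he' : e ∈ (K.deleteEdge b).edges := mem_deleteEdge_edges.mpr ⟨he, heb⟩
    have hpos : χ u * χ v * K.sgn e = 1 := hbal e he' u v huv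
    have hiff : ReflTransGen (K.deleteEdge b).Adj c u ↔ ReflTransGen (K.deleteEdge b).Adj c v :=
      ⟨fun h => h.tail ⟨e, he', huv⟩, fun h => h.tail ⟨e, he', huv.trans Sym2.eq_swap⟩⟩
    by_cases hu : ReflTransGen (K.deleteEdge b).Adj c u
    · simp only [χ', hu, hiff.mp hu, if_true]
      calc d * χ u * (d * χ v) * K.sgn e = (d * d) * (χ u * χ v * K.sgn e) := by ring
        _ = 1 := by rw [sign_mul_self hd, hpos, one_mul]
    · simp only [χ', hu, mt hiff.mpr hu, if_false]
      exact hpos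

theorem balanced_of_allCyclesPositive {K : SignedGraph} (hK : AllCyclesPositive K) :
    K.Balanced := by
  induction hn : K.edges.card using Nat.strong_induction_on generalizing K with
  | _ n ih =>
  rcases K.edges.eq_empty_or_nonempty with hemp | ⟨b, hb⟩
  · exact balanced_of_isBalancing (χ := fun _ => 1) (fun _ => Or.inl rfl)
      (fun e he => by simp [hemp] at he)
  have hlt : (K.deleteEdge b).edges.card < n := hn ▸ Finset.card_lt_card
    ⟨fun e he => (mem_deleteEdge_edges.mp he).1,
      fun hsub => (mem_deleteEdge_edges.mp (hsub hb)).2 rfl⟩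
  obtain ⟨χ, hχ, hbal⟩ := exists_isBalancing_of_balanced
    (ih _ hlt (hK.mono (deleteEdge_isSubgraph K b)) rfl)
  obtain ⟨a, c, hac⟩ := K.exists_ends_eq b
  by_cases hr : ReflTransGen (K.deleteEdge b).Adj c a
  · exact balanced_of_isBalancing hχ (hbal.of_deleteEdge_of_reach hK hχ hb hac hr)
  · obtain ⟨χ', hχ', hbal'⟩ := hbal.of_deleteEdge_of_not_reach hχ hb hac hr
    exact balanced_of_isBalancing hχ' hbal'

theorem exists_unbalanced_cycle {K : SignedGraph} (hK : ¬ K.Balanced) :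
    ∃ x y vs es f, K.IsCycle x y vs es f ∧ K.cycleSign es f = -1 := by
  by_contra hno
  exact hK (balanced_of_allCyclesPositive fun x y vs es f hc =>
    hc.cycleSign_sign.resolve_right fun hneg => hno ⟨x, y, vs, es, f, hc, hneg⟩)

end

/-! ### Barbells -/

section

variable {G : SignedGraph}

def union3 (G A B C : SignedGraph) (hA : IsSubgraph A G) (hB : IsSubgraph B G)
    (hC : IsSubgraph C G) : SignedGraph where
  verts := A.verts ∪ B.verts ∪ C.verts
  edges := A.edges ∪ B.edges ∪ C.edges
  ends := G.ends
  sgn := G.sgn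
  ends_mem e he w hw := by
    simp only [Finset.mem_union] at he ⊢
    rcases he with (he | he) | he
    · exact Or.inl (Or.inl (A.ends_mem e he w (by rwa [hA.ends_eq he])))
    · exact Or.inl (Or.inr (B.ends_mem e he w (by rwa [hB.ends_eq he])))
    · exact Or.inr (C.ends_mem e he w (by rwa [hC.ends_eq he]))
  sgn_unit e he := by
    simp only [Finset.mem_union] at he
    rcases he with (he | he) | he
    · exact G.sgn_unit e (hA.mem_edges he)
    · exact G.sgn_unit e (hB.mem_edges he)
    · exact G.sgn_unit e (hC.mem_edges he)

section union3

variable {A B C : SignedGraph} (hA : IsSubgraph A G) (hB : IsSubgraph B G)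
  (hC : IsSubgraph C G)

lemma union3_isSubgraph : IsSubgraph (union3 G A B C hA hB hC) G := by
  refine ⟨fun v hv => ?_, fun e he => ?_, fun _ _ => ⟨rfl, rfl⟩⟩
  · simp only [union3, Finset.mem_union] at hv
    rcases hv with (hv | hv) | hv
    exacts [hA.mem_verts hv, hB.mem_verts hv, hC.mem_verts hv]
  · simp only [union3, Finset.mem_union] at he
    rcases he with (he | he) | he
    exacts [hA.mem_edges he, hB.mem_edges he, hC.mem_edges he]

lemma union3_isUnion3 : IsUnion3 (union3 G A B C hA hB hC) A B C := by
  refine ⟨⟨fun v hv => ?_, fun e he => ?_, fun e he => ⟨hA.ends_eq he, hA.sgn_eq he⟩⟩,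
    ⟨fun v hv => ?_, fun e he => ?_, fun e he => ⟨hB.ends_eq he, hB.sgn_eq he⟩⟩,
    ⟨fun v hv => ?_, fun e he => ?_, fun e he => ⟨hC.ends_eq he, hC.sgn_eq he⟩⟩, rfl, rfl⟩
  all_goals simp [union3, *]

end union3

lemma Walk.not_mem_edges_of_meets_once {z₁ z₂ z : ℕ} {ps qs : List ℕ}
    (hw : Walk G z₁ z₂ ps qs) (hnd : ps.Nodup) {C : SignedGraph} (hC : IsSubgraph C G)
    (hp : ∀ w ∈ ps, w ∈ C.verts → w = z) : ∀ e ∈ qs, e ∉ C.edges := by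
  intro e he heC
  obtain ⟨a, b, hab, ha, hb, hne⟩ := hw.ends_ne_of_nodup hnd e he
  have hCab : C.ends e = s(a, b) := (hC.ends_eq heC).trans hab
  exact hne ((hp a ha (left_mem_verts heC hCab)).trans (hp b hb (right_mem_verts heC hCab)).symm)

lemma toFinset_inter_eq_singleton {S : Finset ℕ} {ps : List ℕ} {z : ℕ} (hz : z ∈ S) (hzp : z ∈ ps)
    (hp : ∀ w ∈ ps, w ∈ S → w = z) : ps.toFinset ∩ S = {z} := by
  ext w
  simp only [Finset.mem_inter, List.mem_toFinset, Finset.mem_singleton]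
  exact ⟨fun h => hp w h.1 h.2, by rintro rfl; exact ⟨hzp, hz⟩⟩

/-- `hverts` says that the circuits are disjoint, or meet only in `z₁ = z₂` (then the path is
trivial). -/
lemma exists_barbell {C₁ C₂ : SignedGraph} {z₁ z₂ : ℕ} {ps qs : List ℕ}
    (hw : Walk G z₁ z₂ ps qs) (hnd : ps.Nodup) (h₁ : IsSubgraph C₁ G) (h₂ : IsSubgraph C₂ G)
    (hC₁ : IsUnbalancedCircuit C₁) (hC₂ : IsUnbalancedCircuit C₂)
    (hverts : C₁.verts ∩ C₂.verts = {z₁} ∩ {z₂}) (hedges : C₁.edges ∩ C₂.edges = ∅)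
    (hz₁ : z₁ ∈ C₁.verts) (hz₂ : z₂ ∈ C₂.verts)
    (hp₁ : ∀ w ∈ ps, w ∈ C₁.verts → w = z₁) (hp₂ : ∀ w ∈ ps, w ∈ C₂.verts → w = z₂) :
    ∃ S, IsSubgraph S G ∧ IsBarbell S ∧ C₁.edges ⊆ S.edges ∧ ∀ e ∈ qs, e ∈ S.edges := by
  have hP := walkGraph_isSubgraph hw
  have hdisj : ∀ {C : SignedGraph} {z : ℕ}, IsSubgraph C G → (∀ w ∈ ps, w ∈ C.verts → w = z) →
      (walkGraph G hw).edges ∩ C.edges = ∅ := fun hC hp =>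
    Finset.eq_empty_of_forall_notMem fun e he => hw.not_mem_edges_of_meets_once hnd hC hp e
      (List.mem_toFinset.mp (Finset.mem_inter.mp he).1) (Finset.mem_inter.mp he).2
  refine ⟨union3 G _ C₁ C₂ hP h₁ h₂, union3_isSubgraph hP h₁ h₂,
    ⟨z₁, z₂, walkGraph G hw, C₁, C₂, walkGraph_isPath hw hnd, hC₁, hC₂,
      union3_isUnion3 hP h₁ h₂, toFinset_inter_eq_singleton hz₁ hw.start_mem hp₁,
      toFinset_inter_eq_singleton hz₂ hw.end_mem hp₂, hverts, hdisj h₁ hp₁, hdisj h₂ hp₂, hedges⟩,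
    fun e he => ?_, fun e he => ?_⟩
  · simp [union3, he]
  · simp [union3, walkGraph, he]

lemma exists_walk_between {S T : Finset ℕ} {s t : ℕ} (hs : s ∈ S) (ht : t ∈ T)
    (htG : t ∈ G.verts) (hr : ReflTransGen G.Adj s t) :
    ∃ z₁ z₂ ps qs, Walk G z₁ z₂ ps qs ∧ ps.Nodup ∧ z₁ ∈ S ∧ z₂ ∈ T ∧
      (∀ w ∈ ps, w ∈ S → w = z₁) ∧ (∀ w ∈ ps, w ∈ T → w = z₂) := by
  obtain ⟨vs, es, hw⟩ := Walk.exists_of_reach htG hr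
  obtain ⟨z₂, p, q, _, _, hwp, -, -, -, hz₂, hpT, -⟩ := hw.split_first T ⟨t, hw.end_mem, ht⟩
  obtain ⟨z₁, p', q', _, _, hwp', -, hpeq, -, hz₁, hp'S, -⟩ :=
    hwp.reverse.split_first S ⟨s, List.mem_reverse.mpr hwp.start_mem, hs⟩
  have hp'p : ∀ w ∈ p', w ∈ p := fun w hw =>
    List.mem_reverse.mp (hpeq ▸ List.mem_append_left _ hw)
  obtain ⟨ps, qs, hwps, hnd, hsub, -⟩ := hwp'.exists_nodup
  exact ⟨z₁, z₂, ps.reverse, qs.reverse, hwps.reverse, List.nodup_reverse.mpr hnd, hz₁, hz₂,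
    fun w hw hwS => hp'S w (hsub w (List.mem_reverse.mp hw)) hwS,
    fun w hw hwT => hpT w (hp'p w (hsub w (List.mem_reverse.mp hw))) hwT⟩

lemma edges_inter_eq_empty {C D : SignedGraph} (hC : IsSubgraph C G) (hD : IsSubgraph D G)
    (hCD : C.verts ∩ D.verts = ∅) : C.edges ∩ D.edges = ∅ := by
  refine Finset.eq_empty_of_forall_notMem fun e he => ?_
  obtain ⟨heC, heD⟩ := Finset.mem_inter.mp he
  obtain ⟨a, b, hab⟩ := C.exists_ends_eq e
  have hDab : D.ends e = s(a, b) := ((hD.ends_eq heD).trans (hC.ends_eq heC).symm).trans hab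
  have : a ∈ C.verts ∩ D.verts :=
    Finset.mem_inter.mpr ⟨left_mem_verts heC hab, left_mem_verts heD hDab⟩
  simp [hCD] at this

/-! ### Sufficiency -/

lemma exists_unbalancedCircuit {K : SignedGraph} (hK : ¬ K.Balanced) :
    ∃ D, IsSubgraph D K ∧ IsUnbalancedCircuit D := by
  obtain ⟨x, y, vs, es, f, hc, hsgn⟩ := exists_unbalanced_cycle hK
  exact ⟨cycleGraph hc, hc.cycleGraph_isSubgraph, hc.cycleGraph_isUnbalancedCircuit hsgn⟩

lemma exists_signedCircuit_of_not_reach (hconn : G.Connected)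
    (hcut : ¬ ∃ b, G.IsCutEdge b ∧ ∃ H, IsComponent (G.deleteEdge b) H ∧ H.Balanced)
    {e u v : ℕ} (he : e ∈ G.edges) (hends : G.ends e = s(u, v))
    (hnr : ¬ ReflTransGen (G.deleteEdge e).Adj u v) :
    ∃ S, IsSubgraph S G ∧ IsSignedCircuit S ∧ e ∈ S.edges := by
  have hside : ∀ w ∈ G.verts, ∃ D, IsSubgraph D G ∧ IsUnbalancedCircuit D ∧
      ∀ z ∈ D.verts, ReflTransGen (G.deleteEdge e).Adj w z := by
    intro w hw
    have hcomp := componentOf_isComponent (K := G.deleteEdge e) hw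
    obtain ⟨D, hD, hDu⟩ := exists_unbalancedCircuit fun hbal =>
      hcut ⟨e, ⟨he, u, v, hends, hnr⟩, _, hcomp, hbal⟩
    exact ⟨D, hD.trans (hcomp.1.trans (deleteEdge_isSubgraph G e)), hDu,
      fun z hz => (mem_componentOf_verts.mp (hD.mem_verts hz)).2⟩
  obtain ⟨D₁, hD₁, hD₁u, hr₁⟩ := hside u (left_mem_verts he hends)
  obtain ⟨D₂, hD₂, hD₂u, hr₂⟩ := hside v (right_mem_verts he hends)
  have hsep : ∀ z₁ ∈ D₁.verts, ∀ z₂ ∈ D₂.verts, ¬ ReflTransGen (G.deleteEdge e).Adj z₁ z₂ :=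
    fun z₁ h₁ z₂ h₂ h => hnr (((hr₁ z₁ h₁).trans h).trans (reach_symm (hr₂ z₂ h₂)))
  have hverts : D₁.verts ∩ D₂.verts = ∅ := Finset.eq_empty_of_forall_notMem fun z hz =>
    hsep z (Finset.mem_inter.mp hz).1 z (Finset.mem_inter.mp hz).2 .refl
  obtain ⟨s, hs⟩ := hD₁u.1.1.1
  obtain ⟨t, ht⟩ := hD₂u.1.1.1
  obtain ⟨z₁, z₂, ps, qs, hw, hnd, hz₁, hz₂, hp₁, hp₂⟩ := exists_walk_between hs ht
    (hD₂.mem_verts ht) (hconn.2 s (hD₁.mem_verts hs) t (hD₂.mem_verts ht))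
  have heq : e ∈ qs := by
    by_contra heq
    exact hsep z₁ hz₁ z₂ hz₂ (hw.mono (H := G.deleteEdge e) hw.verts_mem
      (fun g hg => mem_deleteEdge_edges.mpr ⟨hw.edges_mem g hg, ne_of_mem_of_not_mem hg heq⟩)
      (fun _ _ => rfl)).reach
  have hz : z₁ ≠ z₂ := fun h => hsep z₁ hz₁ z₂ hz₂ (h ▸ .refl)
  obtain ⟨S, hS, hSb, -, hqs⟩ := exists_barbell hw hnd hD₁ hD₂ hD₁u hD₂u
    (by rw [hverts, Finset.singleton_inter_of_notMem (by simpa using hz)])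
    (edges_inter_eq_empty hD₁ hD₂ hverts) hz₁ hz₂ hp₁ hp₂
  exact ⟨S, hS, Or.inr hSb, hqs e heq⟩

lemma exists_barbell_of_connected (hconn : G.Connected) {C D : SignedGraph}
    (hC : IsSubgraph C G) (hD : IsSubgraph D G)
    (hCu : IsUnbalancedCircuit C) (hDu : IsUnbalancedCircuit D)
    (hCD : ∀ a ∈ C.verts ∩ D.verts, ∀ b ∈ C.verts ∩ D.verts, a = b)
    (hedges : C.edges ∩ D.edges = ∅) :
    ∃ S, IsSubgraph S G ∧ IsBarbell S ∧ C.edges ⊆ S.edges := by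
  by_cases hmeet : ∃ z, z ∈ C.verts ∩ D.verts
  · obtain ⟨z, hz⟩ := hmeet
    obtain ⟨hzC, hzD⟩ := Finset.mem_inter.mp hz
    have hverts : C.verts ∩ D.verts = {z} ∩ {z} := by
      rw [Finset.inter_self]
      exact Finset.eq_singleton_iff_unique_mem.mpr ⟨hz, fun w hw => hCD w hw z hz⟩
    obtain ⟨S, hS, hSb, hCS, -⟩ := exists_barbell (Walk.nil z (hC.mem_verts hzC))
      (List.nodup_singleton z) hC hD hCu hDu hverts hedges hzC hzD (by simp) (by simp)
    exact ⟨S, hS, hSb, hCS⟩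
  · obtain ⟨s, hs⟩ := hCu.1.1.1
    obtain ⟨t, ht⟩ := hDu.1.1.1
    obtain ⟨z₁, z₂, ps, qs, hw, hnd, hz₁, hz₂, hp₁, hp₂⟩ := exists_walk_between hs ht
      (hD.mem_verts ht) (hconn.2 s (hC.mem_verts hs) t (hD.mem_verts ht))
    have hz : z₁ ≠ z₂ := fun h => hmeet ⟨z₁, Finset.mem_inter.mpr ⟨hz₁, h ▸ hz₂⟩⟩
    have hverts : C.verts ∩ D.verts = {z₁} ∩ {z₂} := by
      rw [Finset.singleton_inter_of_notMem (by simpa using hz)]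
      exact Finset.eq_empty_of_forall_notMem fun w hw => hmeet ⟨w, hw⟩
    obtain ⟨S, hS, hSb, hCS, -⟩ := exists_barbell hw hnd hC hD hCu hDu hverts hedges
      hz₁ hz₂ hp₁ hp₂
    exact ⟨S, hS, hSb, hCS⟩

lemma Walk.nodup_of_append {x y z : ℕ} {p q p' q' : List ℕ} (hw : Walk G x z p q)
    (hw' : Walk G z y p' q') (hnd : (p ++ p'.tail).Nodup) :
    p.Nodup ∧ p'.Nodup ∧ ∀ w ∈ p, w ∈ p' → w = z := by
  obtain ⟨t, rfl⟩ := hw'.exists_eq_cons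
  obtain ⟨h₁, h₂, h₃⟩ := List.nodup_append.mp hnd
  refine ⟨h₁, List.nodup_cons.mpr ⟨fun hz => h₃ z hw.end_mem z hz rfl, h₂⟩, fun w hw hw' => ?_⟩
  rcases List.mem_cons.mp hw' with rfl | hwt
  · rfl
  · exact absurd rfl (h₃ w hw w hwt)

/-- The initial segments of a path `vs` from either end up to a set `T` that it meets twice. -/
lemma Walk.exists_ears {u v : ℕ} {vs es : List ℕ} (hw : Walk G v u vs es) (hnd : vs.Nodup)
    {T : Finset ℕ} {a b : ℕ} (hab : a ≠ b) (ha : a ∈ vs) (haT : a ∈ T) (hb : b ∈ vs)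
    (hbT : b ∈ T) :
    ∃ a' b' p q p' q', a' ≠ b' ∧ a' ∈ T ∧ b' ∈ T ∧ Walk G u a' p q ∧ Walk G b' v p' q' ∧
      p.Nodup ∧ p'.Nodup ∧ (∀ w ∈ p, w ∈ T → w = a') ∧ (∀ w ∈ p', w ∈ T → w = b') ∧
      (∀ w ∈ p, w ∉ p') ∧ ∀ g ∈ q ++ q', g ∈ es := by
  obtain ⟨b', p₁, q₁, p₁', q₁', hw₁, hw₁', hveq, heeq, hb'T, hp₁T, -⟩ :=
    hw.split_first T ⟨a, ha, haT⟩
  obtain ⟨hnd₁, hnd₁', hjoin⟩ := hw₁.nodup_of_append hw₁' (hveq ▸ hnd)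
  obtain ⟨a', p₂, q₂, r, qr, hw₂, hwr, hreq, hqeq, ha'T, hp₂T, -⟩ :=
    hw₁'.reverse.split_first T ⟨b', List.mem_reverse.mpr hw₁'.start_mem, hb'T⟩
  obtain ⟨hnd₂, hndr, -⟩ := hw₂.nodup_of_append hwr (hreq ▸ List.nodup_reverse.mpr hnd₁')
  have hp₂p₁' : ∀ w ∈ p₂, w ∈ p₁' := fun w hw =>
    List.mem_reverse.mp (hreq ▸ List.mem_append_left _ hw)
  have hne : a' ≠ b' := by
    rintro rfl
    obtain ⟨-, rfl⟩ := hwr.eq_of_nodup_of_nil hndr rfl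
    have honly : ∀ w ∈ vs, w ∈ T → w = a' := by
      intro w hw hwT
      rw [hveq] at hw
      rcases List.mem_append.mp hw with hw | hw
      · exact hp₁T w hw hwT
      · have : w ∈ p₁'.reverse := List.mem_reverse.mpr (List.mem_of_mem_tail hw)
        rw [hreq, List.tail_cons, List.append_nil] at this
        exact hp₂T w this hwT
    exact hab ((honly a ha haT).trans (honly b hb hbT).symm)
  refine ⟨a', b', p₂, q₂, p₁.reverse, q₁.reverse, hne, ha'T, hb'T, hw₂, hw₁.reverse, hnd₂,
    List.nodup_reverse.mpr hnd₁, hp₂T, fun w hw => hp₁T w (List.mem_reverse.mp hw),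
    fun w hw hw' => ?_, fun g hg => ?_⟩
  · obtain rfl := hjoin w (List.mem_reverse.mp hw') (hp₂p₁' w hw)
    exact hne (hp₂T w hw hb'T).symm
  · rw [heeq]
    rcases List.mem_append.mp hg with hg | hg
    · have : g ∈ q₁'.reverse := hqeq ▸ List.mem_append_left _ hg
      exact List.mem_append_right _ (List.mem_reverse.mp this)
    · exact List.mem_append_left _ (List.mem_reverse.mp hg)

/-- The two arcs of a cycle between two of its vertices, when the walk of the cycle reaches
`a` before `b`. -/
lemma IsCycle.exists_arcs_of_split {x y a b : ℕ} {ws fs α qα β qβ : List ℕ} {f : ℕ}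
    (hc : G.IsCycle x y ws fs f) (hα : Walk G x a α qα) (hβ : Walk G a y β qβ)
    (hws : ws = α ++ β.tail) (hfs : fs = qα ++ qβ) (hab : a ≠ b) (hb : b ∈ β) :
    ∃ A₁ B₁ A₂ B₂, Walk G a b A₁ B₁ ∧ Walk G b a A₂ B₂ ∧ A₁.Nodup ∧ A₂.Nodup ∧
      (∀ w ∈ A₁, w ∈ ws) ∧ (∀ w ∈ A₂, w ∈ ws) ∧ (∀ g ∈ B₁, g ∈ f :: fs) ∧
      (∀ g ∈ B₂, g ∈ f :: fs) ∧
      (B₁.map G.sgn).prod * (B₂.map G.sgn).prod = G.cycleSign fs f := by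
  obtain ⟨hndα, hndβ, hαβ⟩ := hα.nodup_of_append hβ (hws ▸ hc.nodup)
  obtain ⟨_, m₁, n₁, m₂, n₂, hm₁, hm₂, hβeq, hqβ, hbS, -, -⟩ :=
    hβ.split_first {b} ⟨b, hb, Finset.mem_singleton_self b⟩
  obtain rfl : b = _ := (Finset.mem_singleton.mp hbS).symm
  obtain ⟨hndm₁, hndm₂, hm₁m₂⟩ := hm₁.nodup_of_append hm₂ (hβeq ▸ hndβ)
  obtain ⟨t, rfl⟩ := hα.exists_eq_cons
  obtain ⟨t₂, rfl⟩ := hm₂.exists_eq_cons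
  have hβws : ∀ w ∈ β, w ∈ ws := by
    intro w hw
    obtain ⟨tβ, rfl⟩ := hβ.exists_eq_cons
    rcases List.mem_cons.mp hw with rfl | hw
    · exact hws ▸ List.mem_append_left _ hα.end_mem
    · exact hws ▸ List.mem_append_right _ hw
  have hm₂β : ∀ w ∈ b :: t₂, w ∈ β := fun w hw => hβeq ▸ by
    rcases List.mem_cons.mp hw with rfl | hw
    · exact List.mem_append_left _ hm₁.end_mem
    · exact List.mem_append_right _ hw
  have hW₂ := (hm₂.snoc hc.mem_edges hc.ends).append hα
  rw [List.tail_cons, List.append_assoc, List.singleton_append] at hW₂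
  refine ⟨m₁, n₁, _, _, hm₁, hW₂, hndm₁, hndm₂.append hndα fun w hw hw' => hab ?_,
    fun w hw => hβws w (hβeq ▸ List.mem_append_left _ hw), fun w hw => ?_, fun g hg => ?_,
    fun g hg => ?_, ?_⟩
  · obtain rfl := hαβ w hw' (hm₂β w hw)
    exact hm₁m₂ w hm₁.start_mem hw
  · rcases List.mem_append.mp hw with hw | hw
    · exact hβws w (hm₂β w hw)
    · exact hws ▸ List.mem_append_left _ hw
  · exact List.mem_cons_of_mem _ (hfs ▸ hqβ ▸ List.mem_append_right _ (List.mem_append_left _ hg))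
  · simp only [List.mem_append, List.mem_singleton] at hg
    rcases hg with (hg | rfl) | hg
    · exact List.mem_cons_of_mem _
        (hfs ▸ hqβ ▸ List.mem_append_right _ (List.mem_append_right _ hg))
    · exact List.mem_cons_self
    · exact List.mem_cons_of_mem _ (hfs ▸ List.mem_append_left _ hg)
  · rw [cycleSign, hfs, hqβ]
    simp only [List.map_append, List.prod_append, List.map_cons, List.map_nil, List.prod_cons,
      List.prod_nil]
    ring

lemma IsCycle.exists_arcs {x y a b : ℕ} {ws fs : List ℕ} {f : ℕ}
    (hc : G.IsCycle x y ws fs f) (hab : a ≠ b) (ha : a ∈ ws) (hb : b ∈ ws) :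
    ∃ A₁ B₁ A₂ B₂, Walk G a b A₁ B₁ ∧ Walk G b a A₂ B₂ ∧ A₁.Nodup ∧ A₂.Nodup ∧
      (∀ w ∈ A₁, w ∈ ws) ∧ (∀ w ∈ A₂, w ∈ ws) ∧ (∀ g ∈ B₁, g ∈ f :: fs) ∧
      (∀ g ∈ B₂, g ∈ f :: fs) ∧
      (B₁.map G.sgn).prod * (B₂.map G.sgn).prod = G.cycleSign fs f := by
  obtain ⟨z, α, qα, β, qβ, hα, hβ, hws, hfs, hz, hfirst, -⟩ :=
    hc.walk.split_first {a, b} ⟨a, ha, by simp⟩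
  have hlater : ∀ {c}, c ∈ ws → c ∈ ({a, b} : Finset ℕ) → c ≠ z → c ∈ β := by
    intro c hc hcS hcz
    rw [hws] at hc
    rcases List.mem_append.mp hc with hc | hc
    · exact absurd (hfirst c hc hcS) hcz
    · exact List.mem_of_mem_tail hc
  rcases Finset.mem_insert.mp hz with rfl | hz
  · exact hc.exists_arcs_of_split hα hβ hws hfs hab (hlater hb (by simp) (Ne.symm hab))
  · obtain rfl := Finset.mem_singleton.mp hz
    obtain ⟨A₁, B₁, A₂, B₂, h₁, h₂, hnd₁, hnd₂, hA₁, hA₂, hB₁, hB₂, hprod⟩ :=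
      hc.exists_arcs_of_split hα hβ hws hfs (Ne.symm hab) (hlater ha (by simp) hab)
    exact ⟨A₂, B₂, A₁, B₁, h₂, h₁, hnd₂, hnd₁, hA₂, hA₁, hB₂, hB₁, by rw [mul_comm, hprod]⟩

lemma isCycle_of_ears {u v a b e : ℕ} {p q A B p' q' : List ℕ} {T : Finset ℕ}
    (hp : Walk G u a p q) (hA : Walk G a b A B) (hp' : Walk G b v p' q')
    (hnd : p.Nodup) (hndA : A.Nodup) (hnd' : p'.Nodup) (hAT : ∀ w ∈ A, w ∈ T)
    (hpT : ∀ w ∈ p, w ∈ T → w = a) (hp'T : ∀ w ∈ p', w ∈ T → w = b)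
    (hdisj : ∀ w ∈ p, w ∉ p') (he : e ∈ G.edges) (hends : G.ends e = s(v, u))
    (heq : e ∉ (q ++ B) ++ q') :
    G.IsCycle u v ((p ++ A.tail) ++ p'.tail) ((q ++ B) ++ q') e := by
  refine ⟨(hp.append hA).append hp', (hp.append hA).append_nodup hp'
    (hp.append_nodup hA hnd hndA fun w hw hwA => hpT w hw (hAT w hwA)) hnd' fun w hw hw' => ?_,
    he, heq, hends⟩
  rcases List.mem_append.mp hw with hw | hw
  · exact absurd hw' (hdisj w hw)
  · exact hp'T w hw' (hAT w (List.mem_of_mem_tail hw))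

lemma cycleSign_mul_cycleSign {e : ℕ} {q B₁ B₂ q' : List ℕ} (he : e ∈ G.edges)
    (hq : ∀ g ∈ q, g ∈ G.edges) (hq' : ∀ g ∈ q', g ∈ G.edges) :
    G.cycleSign ((q ++ B₁) ++ q') e * G.cycleSign ((q ++ B₂) ++ q') e =
      (B₁.map G.sgn).prod * (B₂.map G.sgn).prod := by
  have hee := sign_mul_self (G.sgn_unit e he)
  have hqq := sign_mul_self (prod_sgn_sign hq)
  have hqq' := sign_mul_self (prod_sgn_sign hq')
  simp only [cycleSign, List.map_append, List.prod_append]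
  calc _ = (G.sgn e * G.sgn e) * ((q.map G.sgn).prod * (q.map G.sgn).prod) *
        ((q'.map G.sgn).prod * (q'.map G.sgn).prod) *
        ((B₁.map G.sgn).prod * (B₂.map G.sgn).prod) := by ring
    _ = _ := by rw [hee, hqq, hqq', one_mul, one_mul, one_mul]

lemma exists_balancedCircuit_of_theta {u v xd yd e fD a b : ℕ} {vs es ws fs : List ℕ}
    (hC : G.IsCycle v u vs es e) (hD : G.IsCycle xd yd ws fs fD)
    (hDsgn : G.cycleSign fs fD = -1) (heD : e ∉ fD :: fs) (hab : a ≠ b) (ha : a ∈ vs)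
    (ha' : a ∈ ws) (hb : b ∈ vs) (hb' : b ∈ ws) :
    ∃ S, IsSubgraph S G ∧ IsBalancedCircuit S ∧ e ∈ S.edges := by
  obtain ⟨a', b', p, q, p', q', hne, ha'T, hb'T, hp, hp', hnd, hnd', hpT, hp'T, hdisj, hqes⟩ :=
    hC.walk.exists_ears hC.nodup hab ha (List.mem_toFinset.mpr ha') hb
      (List.mem_toFinset.mpr hb')
  obtain ⟨A₁, B₁, A₂, B₂, hA₁, hA₂, hndA₁, hndA₂, hA₁ws, hA₂ws, hB₁, hB₂, hprod⟩ :=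
    hD.exists_arcs hne (List.mem_toFinset.mp ha'T) (List.mem_toFinset.mp hb'T)
  have hcyc : ∀ {A B}, Walk G a' b' A B → A.Nodup → (∀ w ∈ A, w ∈ ws) →
      (∀ g ∈ B, g ∈ fD :: fs) → G.IsCycle u v ((p ++ A.tail) ++ p'.tail) ((q ++ B) ++ q') e := by
    intro A B hA hndA hAws hB
    refine isCycle_of_ears hp hA hp' hnd hndA hnd' (fun w hw => List.mem_toFinset.mpr (hAws w hw))
      hpT hp'T hdisj hC.mem_edges (hC.ends.trans Sym2.eq_swap) fun heq => ?_
    simp only [List.mem_append] at heq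
    rcases heq with (heq | heq) | heq
    · exact hC.not_mem (hqes e (List.mem_append_left _ heq))
    · exact heD (hB e heq)
    · exact hC.not_mem (hqes e (List.mem_append_right _ heq))
  have hC₁ := hcyc hA₁ hndA₁ hA₁ws hB₁
  have hC₂ := hcyc hA₂.reverse (List.nodup_reverse.mpr hndA₂)
    (fun w hw => hA₂ws w (List.mem_reverse.mp hw)) (fun g hg => hB₂ g (List.mem_reverse.mp hg))
  have hsigns : G.cycleSign ((q ++ B₁) ++ q') e * G.cycleSign ((q ++ B₂.reverse) ++ q') e = -1 := by
    rw [cycleSign_mul_cycleSign hC.mem_edges hp.edges_mem hp'.edges_mem, List.map_reverse,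
      List.prod_reverse, hprod, hDsgn]
  rcases hC₁.cycleSign_sign with h₁ | h₁
  · exact ⟨cycleGraph hC₁, hC₁.cycleGraph_isSubgraph, hC₁.cycleGraph_isBalancedCircuit h₁,
      hC₁.closing_mem_cycleGraph⟩
  · have h₂ : G.cycleSign ((q ++ B₂.reverse) ++ q') e = 1 := by
      rw [h₁] at hsigns
      linarith
    exact ⟨cycleGraph hC₂, hC₂.cycleGraph_isSubgraph, hC₂.cycleGraph_isBalancedCircuit h₂,
      hC₂.closing_mem_cycleGraph⟩

lemma exists_barbell_of_cycles (hconn : G.Connected) {x y x' y' f f' : ℕ}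
    {vs es ws fs : List ℕ} (hC : G.IsCycle x y vs es f) (hD : G.IsCycle x' y' ws fs f')
    (hCsgn : G.cycleSign es f = -1) (hDsgn : G.cycleSign fs f' = -1) (hf : f ∉ f' :: fs)
    (hmeet : ∀ a ∈ vs, a ∈ ws → ∀ b ∈ vs, b ∈ ws → a = b) :
    ∃ S, IsSubgraph S G ∧ IsBarbell S ∧ f ∈ S.edges := by
  have hCD : ∀ a ∈ (cycleGraph hC).verts ∩ (cycleGraph hD).verts,
      ∀ b ∈ (cycleGraph hC).verts ∩ (cycleGraph hD).verts, a = b := by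
    intro a ha b hb
    simp only [cycleGraph, Finset.mem_inter, List.mem_toFinset] at ha hb
    exact hmeet a ha.1 ha.2 b hb.1 hb.2
  have hedges : (cycleGraph hC).edges ∩ (cycleGraph hD).edges = ∅ := by
    refine Finset.eq_empty_of_forall_notMem fun g hg => ?_
    obtain ⟨hgC, hgD⟩ := Finset.mem_inter.mp hg
    rcases Finset.mem_insert.mp hgC with rfl | hgC
    · exact hf (by simpa [cycleGraph] using hgD)
    obtain ⟨a, b, hab, ha, hb, hne⟩ :=
      hC.walk.ends_ne_of_nodup hC.nodup g (List.mem_toFinset.mp hgC)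
    have hDab : (cycleGraph hD).ends g = s(a, b) := hab
    exact hne (hmeet a ha (List.mem_toFinset.mp (left_mem_verts hgD hDab)) b hb
      (List.mem_toFinset.mp (right_mem_verts hgD hDab)))
  obtain ⟨S, hS, hSb, hCS⟩ := exists_barbell_of_connected hconn hC.cycleGraph_isSubgraph
    hD.cycleGraph_isSubgraph (hC.cycleGraph_isUnbalancedCircuit hCsgn)
    (hD.cycleGraph_isUnbalancedCircuit hDsgn) hCD hedges
  exact ⟨S, hS, hSb, hCS hC.closing_mem_cycleGraph⟩

lemma exists_signedCircuit_of_reach (hconn : G.Connected) (hneg : G.negativeness ≠ 1)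
    {e u v : ℕ} (he : e ∈ G.edges) (hends : G.ends e = s(u, v))
    (hr : ReflTransGen (G.deleteEdge e).Adj v u) :
    ∃ S, IsSubgraph S G ∧ IsSignedCircuit S ∧ e ∈ S.edges := by
  have hKG := deleteEdge_isSubgraph G e
  have heK : ∀ {g}, g ∈ (G.deleteEdge e).edges → g ≠ e := fun hg => (mem_deleteEdge_edges.mp hg).2
  obtain ⟨vs₀, es₀, hw₀⟩ :=
    Walk.exists_of_reach (G := G.deleteEdge e) (left_mem_verts (G := G) he hends) hr
  obtain ⟨vs, es, hw, hnd, -, -⟩ := hw₀.exists_nodup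
  have hC : G.IsCycle v u vs es e :=
    ⟨hw.of_isSubgraph hKG, hnd, he, fun h => heK (hw.edges_mem e h) rfl, hends⟩
  rcases hC.cycleSign_sign with hpos | hCsgn
  · exact ⟨cycleGraph hC, hC.cycleGraph_isSubgraph, Or.inl (hC.cycleGraph_isBalancedCircuit hpos),
      hC.closing_mem_cycleGraph⟩
  obtain ⟨xd, yd, ws, fs, fD, hD, hDsgn⟩ := exists_unbalanced_cycle fun hbal =>
    not_balanced_of_unbalancedCircuit hC.cycleGraph_isSubgraph
      (hC.cycleGraph_isUnbalancedCircuit hCsgn) (balanced_of_balanced_deleteEdge hneg hbal)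
  rw [hD.cycleSign_of_isSubgraph hKG] at hDsgn
  have heD : e ∉ fD :: fs := by
    rintro (_ | ⟨_, h⟩)
    · exact heK hD.mem_edges rfl
    · exact heK (hD.walk.edges_mem e h) rfl
  have hDG := hD.of_isSubgraph hKG
  by_cases hmeet : ∀ a ∈ vs, a ∈ ws → ∀ b ∈ vs, b ∈ ws → a = b
  · obtain ⟨S, hS, hSb, heS⟩ := exists_barbell_of_cycles hconn hC hDG hCsgn hDsgn heD hmeet
    exact ⟨S, hS, Or.inr hSb, heS⟩
  · push Not at hmeet
    obtain ⟨a, ha, ha', b, hb, hb', hab⟩ := hmeet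
    obtain ⟨S, hS, hSb, heS⟩ :=
      exists_balancedCircuit_of_theta hC hDG hDsgn heD hab ha ha' hb hb'
    exact ⟨S, hS, Or.inl hSb, heS⟩

theorem coverable_of_negativeness_ne_one (hconn : G.Connected) (hneg : G.negativeness ≠ 1)
    (hcut : ¬ ∃ b, G.IsCutEdge b ∧ ∃ H, IsComponent (G.deleteEdge b) H ∧ H.Balanced) :
    G.Coverable := by
  refine coverable_iff.mpr fun e he => ?_
  obtain ⟨u, v, hends⟩ := G.exists_ends_eq e
  by_cases hr : ReflTransGen (G.deleteEdge e).Adj v u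
  · exact exists_signedCircuit_of_reach hconn hneg he hends hr
  · exact exists_signedCircuit_of_not_reach hconn hcut he hends fun h => hr (reach_symm h)

end

/-- **Proposition.** A connected signed graph `G` is coverable iff its
negativeness is not `1` and no cut edge `b` leaves a balanced component in `G - b`. -/
theorem coverable_iff_negativeness_ne_one_and_no_balanced_component
    (G : SignedGraph) (hconn : G.Connected) :
    G.Coverable ↔
      (G.negativeness ≠ 1 ∧
        ¬ ∃ b, G.IsCutEdge b ∧ ∃ H, IsComponent (G.deleteEdge b) H ∧ H.Balanced) :=
  ⟨fun hcov => ⟨negativeness_ne_one_of_coverable hcov,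
      not_exists_balanced_component_of_coverable hconn hcov⟩,
    fun ⟨hneg, hcut⟩ => coverable_of_negativeness_ne_one hconn hneg hcut⟩

end SignedGraph
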